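/- arXiv:2510.12398 — 6 statements merged into one kernel-verified Lean document; each statement's English description precedes it below -/
import Mathlib

section
/- Let (X, d) be a complete separable metric space and let (μ_i)_{i∈ℕ} be Borel probability measures on X converging weakly to a Borel probability measure μ on X. If there is a constant C < ∞ with Var(μ_i, μ_i) ≤ C for every i, then for every p ∈ [1, 2) one has W_p(μ_i, μ)^p → 0 as i → ∞; that is, the infimum over all couplings π of (μ_i, μ) of ∫_{X×X} d(x, y)^p dπ(x, y) tends to 0. -/
open MeasureTheory Filter
open scoped ENNReal

/-- The variance between two Borel measures on a metric space:
`Var(μ, ν) = ∫∫ d(x,y)² dμ(x) dν(y)`, valued in `[0, ∞]`. -/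
noncomputable def var2 {X : Type*} [PseudoEMetricSpace X] [MeasurableSpace X]
    (μ ν : Measure X) : ℝ≥0∞ :=
  ∫⁻ x, ∫⁻ y, edist x y ^ 2 ∂ν ∂μ

/-- `π` is a coupling of `μ` and `ν` if its two marginals are `μ` and `ν`. -/
def IsCoupling {X : Type*} [MeasurableSpace X] (π : Measure (X × X)) (μ ν : Measure X) : Prop :=
  π.map Prod.fst = μ ∧ π.map Prod.snd = ν

/-- The `p`-th power of the `W_p`-Wasserstein distance:
the infimum over all couplings `π` of `(μ, ν)` of `∫ d(x,y)^p dπ(x,y)`. -/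
noncomputable def wassersteinPow {X : Type*} [PseudoEMetricSpace X] [MeasurableSpace X]
    (p : ℝ) (μ ν : Measure X) : ℝ≥0∞ :=
  ⨅ π : {π : Measure (X × X) // IsCoupling π μ ν}, ∫⁻ q, edist q.1 q.2 ^ p ∂(π : Measure (X × X))

/-!
Fix `ε > 0` and a threshold `R`. Balls of radius `< ε / 2` around a dense sequence, with `ν`-null
frontiers and made disjoint, cut `X` into Borel cells of diameter `≤ ε`; finitely many of them
carry all but `ε` of the mass of `ν`, and by the portmanteau theorem the `μ i`-mass of each tends to
its `ν`-mass. Eventually, a coupling of `μ i` and `ν` that keeps the common mass of each of these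
cells inside it moves all but mass `ε` by at most `ε`. The rest costs at most `R ^ p` per unit mass
below distance `R`, and above it `d ^ p ≤ R ^ (p - 2) d ^ 2`, where the second moments of the `μ i`
about a fixed point are eventually bounded: a ball of `ν`-mass `> 1/2` eventually has `μ i`-mass
`> 1/2`, and contains a point whose mean squared distance to `μ i` is at most `2 Var(μ i, μ i)`.
Hence `limsup W_p(μ i, ν)^p ≤ ε ^ p + R ^ p ε + 4 M R ^ (p - 2)`, which tends to `0` as `ε → 0`
and then `R → ∞`, since `p < 2`.
-/

open Set Topology Function
open scoped NNReal

namespace IsCoupling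

variable {X : Type*} [MeasurableSpace X] {π π₀ π₁ π₂ : Measure (X × X)}
  {μ ν μ₀ ν₀ μ₁ ν₁ μ₂ ν₂ : Measure X}

lemma add (h₁ : IsCoupling π₁ μ₁ ν₁) (h₂ : IsCoupling π₂ μ₂ ν₂) :
    IsCoupling (π₁ + π₂) (μ₁ + μ₂) (ν₁ + ν₂) :=
  ⟨by rw [Measure.map_add _ _ measurable_fst, h₁.1, h₂.1],
    by rw [Measure.map_add _ _ measurable_snd, h₁.2, h₂.2]⟩

lemma finsetSum {ι : Type*} (s : Finset ι) {π : ι → Measure (X × X)} {μ ν : ι → Measure X}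
    (h : ∀ k ∈ s, IsCoupling (π k) (μ k) (ν k)) :
    IsCoupling (∑ k ∈ s, π k) (∑ k ∈ s, μ k) (∑ k ∈ s, ν k) := by
  classical
  induction s using Finset.induction_on with
  | empty => simp [IsCoupling]
  | insert k s hk ih =>
    simp only [Finset.sum_insert hk]
    exact (h k (Finset.mem_insert_self k s)).add
      (ih fun j hj => h j (Finset.mem_insert_of_mem hj))

lemma measure_univ_fst (h : IsCoupling π μ ν) : π univ = μ univ := by
  rw [← h.1, Measure.map_apply measurable_fst MeasurableSet.univ, preimage_univ]

lemma measure_univ_snd (h : IsCoupling π μ ν) : π univ = ν univ := by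
  rw [← h.2, Measure.map_apply measurable_snd MeasurableSet.univ, preimage_univ]

lemma lintegral_fst (h : IsCoupling π μ ν) {f : X → ℝ≥0∞} (hf : Measurable f) :
    ∫⁻ q, f q.1 ∂π = ∫⁻ x, f x ∂μ := by
  rw [← h.1, lintegral_map hf measurable_fst]

lemma lintegral_snd (h : IsCoupling π μ ν) {f : X → ℝ≥0∞} (hf : Measurable f) :
    ∫⁻ q, f q.2 ∂π = ∫⁻ y, f y ∂ν := by
  rw [← h.2, lintegral_map hf measurable_snd]

lemma smul_prod [IsFiniteMeasure μ] [IsFiniteMeasure ν] {a : ℝ≥0∞} (hμ : μ univ = a)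
    (hν : ν univ = a) : IsCoupling (a⁻¹ • μ.prod ν) μ ν := by
  rcases eq_or_ne a 0 with rfl | ha
  · rw [Measure.measure_univ_eq_zero] at hμ hν
    simp [IsCoupling, hμ, hν]
  have ha' : a ≠ ⊤ := hμ ▸ measure_ne_top μ univ
  refine ⟨?_, ?_⟩
  · rw [Measure.map_smul, Measure.map_fst_prod, smul_smul, hν, ENNReal.inv_mul_cancel ha ha',
      one_smul]
  · rw [Measure.map_smul, Measure.map_snd_prod, smul_smul, hμ, ENNReal.inv_mul_cancel ha ha',
      one_smul]

/-- The remainders `μ - μ₀` and `ν - ν₀` have equal mass and are coupled independently. -/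
theorem exists_isCoupling_ge [IsFiniteMeasure μ] [IsFiniteMeasure ν] (h : μ univ = ν univ)
    (h₀ : IsCoupling π₀ μ₀ ν₀) (hμ : μ₀ ≤ μ) (hν : ν₀ ≤ ν) :
    ∃ π, IsCoupling π μ ν ∧ π₀ ≤ π := by
  have := isFiniteMeasure_of_le μ hμ
  have := isFiniteMeasure_of_le ν hν
  have hrest : IsCoupling (((μ - μ₀) univ)⁻¹ • (μ - μ₀).prod (ν - ν₀)) (μ - μ₀) (ν - ν₀) := by
    refine smul_prod rfl ?_
    rw [Measure.sub_apply .univ hμ, Measure.sub_apply .univ hν, h, ← h₀.measure_univ_fst,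
      h₀.measure_univ_snd]
  have hπ := h₀.add hrest
  rw [add_comm μ₀, add_comm ν₀, Measure.sub_add_cancel_of_le hμ,
    Measure.sub_add_cancel_of_le hν] at hπ
  exact ⟨_, hπ, Measure.le_add_right le_rfl⟩

end IsCoupling

namespace MeasureTheory.Measure

variable {X : Type*} [MeasurableSpace X] {μ : Measure X}

lemma div_smul_restrict_apply_of_subset [IsFiniteMeasure μ] {s t : Set X} {m : ℝ≥0∞}
    (hm : m ≤ μ s) (hst : s ⊆ t) : ((m / μ s) • μ.restrict s) t = m := by
  rw [Measure.smul_apply, Measure.restrict_apply_superset hst, smul_eq_mul]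
  exact ENNReal.div_mul_cancel' (fun h => le_antisymm (h ▸ hm) bot_le)
    fun h => absurd h (measure_ne_top μ s)

lemma div_smul_restrict_le {s : Set X} {m : ℝ≥0∞} (hm : m ≤ μ s) :
    (m / μ s) • μ.restrict s ≤ μ.restrict s := fun t =>
  mul_le_of_le_one_left bot_le (ENNReal.div_le_of_le_mul (by rwa [one_mul]))

lemma finsetSum_restrict_le {ι : Type*} {s : Finset ι} {c : ι → Set X}
    (hc : ∀ k, MeasurableSet (c k)) (hdisj : (s : Set ι).PairwiseDisjoint c) :
    ∑ k ∈ s, μ.restrict (c k) ≤ μ := by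
  refine Measure.le_iff.2 fun A hA => ?_
  simp only [Measure.finsetSum_apply, Measure.restrict_apply hA]
  rw [← measure_biUnion_finset (hdisj.mono_on fun k _ => inter_subset_right)
    fun k _ => hA.inter (hc k)]
  exact measure_mono (iUnion₂_subset fun k _ => inter_subset_left)

end MeasureTheory.Measure

/-- On each cell, the restrictions of `μ` and `ν`, scaled down to their common mass
`min (μ (c k)) (ν (c k))`, are coupled independently; the sum of these pieces is then extended. -/
theorem exists_isCoupling_min_le_measure_prod_self {X : Type*} [MeasurableSpace X]
    {μ ν : Measure X} [IsFiniteMeasure μ] [IsFiniteMeasure ν] (h : μ univ = ν univ)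
    {ι : Type*} (s : Finset ι) {c : ι → Set X}
    (hc : ∀ k, MeasurableSet (c k)) (hdisj : (s : Set ι).PairwiseDisjoint c) :
    ∃ π, IsCoupling π μ ν ∧ ∀ k ∈ s, min (μ (c k)) (ν (c k)) ≤ π (c k ×ˢ c k) := by
  set m := fun k => min (μ (c k)) (ν (c k))
  set α := fun k => (m k / μ (c k)) • μ.restrict (c k)
  set β := fun k => (m k / ν (c k)) • ν.restrict (c k)
  have hα (k : ι) {t : Set X} (ht : c k ⊆ t) : α k t = m k :=
    Measure.div_smul_restrict_apply_of_subset (min_le_left _ _) ht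
  have hβ (k : ι) {t : Set X} (ht : c k ⊆ t) : β k t = m k :=
    Measure.div_smul_restrict_apply_of_subset (min_le_right _ _) ht
  have (k : ι) : IsFiniteMeasure (α k) :=
    isFiniteMeasure_of_le _ (Measure.div_smul_restrict_le (min_le_left _ _))
  have (k : ι) : IsFiniteMeasure (β k) :=
    isFiniteMeasure_of_le _ (Measure.div_smul_restrict_le (min_le_right _ _))
  set πc := fun k => (m k)⁻¹ • (α k).prod (β k)
  have hπc (k : ι) : IsCoupling (πc k) (α k) (β k) :=
    IsCoupling.smul_prod (hα k (subset_univ _)) (hβ k (subset_univ _))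
  have hπc_cell (k : ι) : m k ≤ πc k (c k ×ˢ c k) := by
    rcases eq_or_ne (m k) 0 with hk | hk
    · exact hk ▸ bot_le
    rw [Measure.smul_apply, Measure.prod_prod, hα k subset_rfl, hβ k subset_rfl, smul_eq_mul,
      ← mul_assoc, ENNReal.inv_mul_cancel hk (ne_top_of_le_ne_top (measure_ne_top μ (c k))
        (min_le_left _ _)), one_mul]
  obtain ⟨π, hπ, hle⟩ :=
    IsCoupling.exists_isCoupling_ge h (IsCoupling.finsetSum s fun k _ => hπc k)
    ((Finset.sum_le_sum fun k _ => Measure.div_smul_restrict_le (min_le_left _ _)).trans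
      (Measure.finsetSum_restrict_le hc hdisj))
    ((Finset.sum_le_sum fun k _ => Measure.div_smul_restrict_le (min_le_right _ _)).trans
      (Measure.finsetSum_restrict_le hc hdisj))
  refine ⟨π, hπ, fun k hk => (hπc_cell k).trans (le_trans ?_ (hle _))⟩
  rw [Measure.finsetSum_apply]
  exact Finset.single_le_sum (f := fun j => πc j (c k ×ˢ c k)) (fun _ _ => bot_le) hk

lemma ENNReal.add_sq_le_two_mul (a b : ℝ≥0∞) : (a + b) ^ 2 ≤ 2 * (a ^ 2 + b ^ 2) := by
  have h := ENNReal.rpow_add_le_mul_rpow_add_rpow a b one_le_two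
  rwa [show (2 : ℝ) - 1 = 1 by norm_num, ENNReal.rpow_one, ENNReal.rpow_two, ENNReal.rpow_two,
    ENNReal.rpow_two] at h

/-- Above `R`, `a ^ p = a ^ (p - 2) * a ^ 2` and `a ^ (p - 2) ≤ R ^ (p - 2)` as `p ≤ 2`. -/
lemma ENNReal.rpow_le_rpow_add_rpow_sub_two_mul_sq {a : ℝ≥0∞} (ha : a ≠ ⊤) (R : ℝ≥0∞) {p : ℝ}
    (hp0 : 0 ≤ p) (hp2 : p ≤ 2) : a ^ p ≤ R ^ p + R ^ (p - 2) * a ^ 2 := by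
  rcases le_or_gt a R with haR | hRa
  · exact le_add_right (ENNReal.rpow_le_rpow haR hp0)
  have ha0 : a ≠ 0 := (bot_le.trans_lt hRa).ne'
  have hsplit : a ^ p = a ^ (p - 2) * a ^ 2 := by
    rw [← ENNReal.rpow_two, ← ENNReal.rpow_add _ _ ha0 ha, sub_add_cancel]
  have hdecr : a ^ (p - 2) ≤ R ^ (p - 2) := by
    rw [← neg_sub, ENNReal.rpow_neg, ENNReal.rpow_neg]
    exact ENNReal.inv_le_inv.2 (ENNReal.rpow_le_rpow hRa.le (by linarith))
  rw [hsplit]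
  exact le_add_left (mul_le_mul_left hdecr _)

lemma edist_sq_le_two_mul {X : Type*} [PseudoEMetricSpace X] (x y z : X) :
    edist x y ^ 2 ≤ 2 * (edist x z ^ 2 + edist y z ^ 2) :=
  (pow_le_pow_left₀ bot_le (edist_triangle_right x y z) 2).trans (ENNReal.add_sq_le_two_mul _ _)

section Cost

variable {X : Type*} [PseudoMetricSpace X] [MeasurableSpace X] [OpensMeasurableSpace X]
  {π : Measure (X × X)}

lemma IsCoupling.lintegral_edist_sq_le {μ ν : Measure X} (h : IsCoupling π μ ν) (z : X) :
    ∫⁻ q, edist q.1 q.2 ^ 2 ∂π ≤ 2 * (∫⁻ x, edist x z ^ 2 ∂μ + ∫⁻ y, edist y z ^ 2 ∂ν) := by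
  have hf : Measurable fun x => edist x z ^ 2 := by fun_prop
  calc ∫⁻ q, edist q.1 q.2 ^ 2 ∂π
      ≤ ∫⁻ q, 2 * (edist q.1 z ^ 2 + edist q.2 z ^ 2) ∂π :=
        lintegral_mono fun q => edist_sq_le_two_mul q.1 q.2 z
    _ = 2 * (∫⁻ x, edist x z ^ 2 ∂μ + ∫⁻ y, edist y z ^ 2 ∂ν) := by
        rw [lintegral_const_mul _ (by fun_prop), lintegral_add_left (by fun_prop),
          h.lintegral_fst hf, h.lintegral_snd hf]

theorem lintegral_edist_rpow_le [SecondCountableTopology X] {B : Set (X × X)}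
    (hB : MeasurableSet B) {E : ℝ≥0∞} (hBE : ∀ q ∈ B, edist q.1 q.2 ≤ E) (R : ℝ≥0∞) {p : ℝ}
    (hp0 : 0 ≤ p) (hp2 : p ≤ 2) :
    ∫⁻ q, edist q.1 q.2 ^ p ∂π ≤
      E ^ p * π B + R ^ p * π Bᶜ + R ^ (p - 2) * ∫⁻ q, edist q.1 q.2 ^ 2 ∂π := by
  have hpt (q : X × X) : edist q.1 q.2 ^ p ≤ B.indicator (fun _ => E ^ p) q +
      Bᶜ.indicator (fun _ => R ^ p) q + R ^ (p - 2) * edist q.1 q.2 ^ 2 := by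
    by_cases hq : q ∈ B
    · simp only [indicator_of_mem hq, indicator_of_notMem (notMem_compl_iff.2 hq), add_zero]
      exact le_add_right (ENNReal.rpow_le_rpow (hBE q hq) hp0)
    · simp only [indicator_of_notMem hq, indicator_of_mem (mem_compl hq), zero_add]
      exact ENNReal.rpow_le_rpow_add_rpow_sub_two_mul_sq (edist_ne_top _ _) R hp0 hp2
  refine (lintegral_mono hpt).trans_eq ?_
  have hmB : Measurable (B.indicator fun _ => E ^ p) := measurable_const.indicator hB
  have hmBc : Measurable (Bᶜ.indicator fun _ => R ^ p) := measurable_const.indicator hB.compl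
  rw [lintegral_add_left (f := fun q => B.indicator _ q + Bᶜ.indicator _ q) (hmB.add hmBc),
    lintegral_add_left hmB, lintegral_indicator_const hB,
    lintegral_indicator_const hB.compl, lintegral_const_mul _ (by fun_prop)]

end Cost

lemma measure_frontier_diff_eq_zero {X : Type*} [TopologicalSpace X] [MeasurableSpace X]
    {μ : Measure X} {s t : Set X} (hs : μ (frontier s) = 0) (ht : μ (frontier t) = 0) :
    μ (frontier (s \ t)) = 0 := by
  refine measure_mono_null ?_ (measure_union_null hs ht)
  rw [sdiff_eq, ← frontier_compl t]
  exact (frontier_inter_subset _ _).trans (union_subset_union inter_subset_left inter_subset_right)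

/-- The pieces are `disjointed` balls with `ν`-null frontiers; the frontier of a piece lies in the
union of finitely many of those. -/
theorem exists_partition_measure_frontier_eq_zero_ediam_le {X : Type*} [PseudoMetricSpace X]
    [TopologicalSpace.SeparableSpace X] [Nonempty X] [MeasurableSpace X] [OpensMeasurableSpace X]
    (ν : Measure X) [SFinite ν] {ε : ℝ} (hε : 0 < ε) :
    ∃ c : ℕ → Set X, (∀ n, MeasurableSet (c n)) ∧ Pairwise (Disjoint on c) ∧ ⋃ n, c n = univ ∧
      (∀ n, ν (frontier (c n)) = 0) ∧ ∀ n, Metric.ediam (c n) ≤ ENNReal.ofReal ε := by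
  obtain ⟨xs, hxs⟩ := TopologicalSpace.exists_dense_seq X
  choose r hr hνr using fun n =>
    exists_null_frontier_thickening ν {xs n} (by linarith : ε / 4 < ε / 2)
  simp only [Metric.thickening_singleton] at hνr
  set B := fun n => Metric.ball (xs n) (r n)
  refine ⟨disjointed B, MeasurableSet.disjointed fun n => measurableSet_ball,
    disjoint_disjointed B, ?_, fun n => disjointedRec (p := fun t => ν (frontier t) = 0)
      (fun t i ht => measure_frontier_diff_eq_zero ht (hνr i)) (hνr n), fun n => ?_⟩
  · rw [iUnion_disjointed]
    refine eq_univ_of_forall fun x => ?_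
    obtain ⟨n, hn⟩ := Metric.denseRange_iff.1 hxs x (ε / 4) (by linarith)
    exact mem_iUnion.2 ⟨n, hn.trans (hr n).1⟩
  · calc Metric.ediam (disjointed B n) ≤ Metric.ediam (B n) :=
          Metric.ediam_mono (disjointed_subset B n)
      _ ≤ 2 * ENNReal.ofReal (r n) := by
          simpa only [B, ← Metric.eball_ofReal] using Metric.ediam_eball_le
      _ ≤ ENNReal.ofReal ε := by
          rw [← ENNReal.ofReal_ofNat 2, ← ENNReal.ofReal_mul zero_le_two]
          exact ENNReal.ofReal_le_ofReal (by linarith [(hr n).2])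

section Moments

variable {X : Type*} [PseudoMetricSpace X] [SecondCountableTopology X] [MeasurableSpace X]
  [BorelSpace X]

/-- Averaging over the ball gives a point `y` in it with `∫ d(y, x)² dμ(x) ≤ 2 Var(μ, μ)`, and
`d(x, z)² ≤ 2 d(y, x)² + 2 d(y, z)²`. -/
theorem lintegral_edist_sq_le_of_lt_measure_ball (μ : Measure X) [IsProbabilityMeasure μ]
    {z : X} {r : ℝ} (hr : 2⁻¹ < μ (Metric.ball z r)) :
    ∫⁻ x, edist x z ^ 2 ∂μ ≤ 2 * (2 * var2 μ μ + ENNReal.ofReal r ^ 2) := by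
  set B := Metric.ball z r
  set g := fun y => ∫⁻ x, edist y x ^ 2 ∂μ
  have hg : Measurable g := Measurable.lintegral_prod_right'
    (f := fun q : X × X => edist q.1 q.2 ^ 2) (by fun_prop)
  have hB0 : μ.restrict B ≠ 0 := by
    rw [Ne, Measure.restrict_eq_zero]; exact (bot_le.trans_lt hr).ne'
  obtain ⟨y, hyB, hy⟩ := exists_notMem_null_le_laverage hB0 hg.aemeasurable
    (by rw [Measure.restrict_apply measurableSet_ball.compl, compl_inter_self, measure_empty])
  have hgy : g y ≤ 2 * var2 μ μ := by
    calc g y ≤ (∫⁻ y in B, g y ∂μ) / μ B := hy.trans_eq (setLAverage_eq μ g B)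
      _ ≤ var2 μ μ / 2⁻¹ := ENNReal.div_le_div (setLIntegral_le_lintegral B g) hr.le
      _ = 2 * var2 μ μ := by rw [div_eq_mul_inv, inv_inv, mul_comm]
  have hyz : edist y z ≤ ENNReal.ofReal r := by
    rw [edist_dist]
    exact ENNReal.ofReal_le_ofReal (Metric.mem_ball.1 (not_not.1 hyB)).le
  calc ∫⁻ x, edist x z ^ 2 ∂μ ≤ ∫⁻ x, 2 * (edist y x ^ 2 + edist y z ^ 2) ∂μ :=
        lintegral_mono fun x => by
          simpa only [edist_comm x y, edist_comm z y] using edist_sq_le_two_mul x z y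
    _ = 2 * (g y + edist y z ^ 2) := by
        rw [lintegral_const_mul _ (by fun_prop), lintegral_add_right _ measurable_const,
          lintegral_const, measure_univ, mul_one]
    _ ≤ 2 * (2 * var2 μ μ + ENNReal.ofReal r ^ 2) := by gcongr

theorem exists_eventually_lintegral_edist_sq_le {μ : ℕ → Measure X} {ν : Measure X}
    [∀ i, IsProbabilityMeasure (μ i)] [IsProbabilityMeasure ν]
    (hopen : ∀ G, IsOpen G → ν G ≤ atTop.liminf fun i => μ i G) {C : ℝ≥0∞} (hC : C ≠ ⊤)
    (hvar : ∀ i, var2 (μ i) (μ i) ≤ C) :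
    ∃ z M, M ≠ ⊤ ∧ (∀ᶠ i in atTop, ∫⁻ x, edist x z ^ 2 ∂μ i ≤ M) ∧
      ∫⁻ x, edist x z ^ 2 ∂ν ≤ M := by
  obtain ⟨z⟩ := nonempty_of_isProbabilityMeasure ν
  obtain ⟨n, hn⟩ : ∃ n : ℕ, 2⁻¹ < ν (Metric.ball z n) := by
    have h := tendsto_measure_iUnion_atTop (μ := ν) fun m n (hmn : m ≤ n) =>
      Metric.ball_subset_ball (Nat.cast_le.2 hmn) (x := z)
    rw [Metric.iUnion_ball_nat, measure_univ] at h
    exact (h.eventually (eventually_gt_nhds (ENNReal.inv_lt_one.2 ENNReal.one_lt_two))).exists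
  have hμ : ∀ᶠ i in atTop, ∫⁻ x, edist x z ^ 2 ∂μ i ≤ 2 * (2 * C + ENNReal.ofReal n ^ 2) :=
    (eventually_lt_of_lt_liminf (hn.trans_le (hopen _ Metric.isOpen_ball))).mono fun i hi =>
      (lintegral_edist_sq_le_of_lt_measure_ball (μ i) hi).trans (by gcongr; exact hvar i)
  refine ⟨z, _, by finiteness, hμ, ?_⟩
  have hsq (x : X) : ENNReal.ofReal (dist x z ^ 2) = edist x z ^ 2 := by
    rw [ENNReal.ofReal_pow dist_nonneg, edist_dist]
  have hlsc := lintegral_le_liminf_lintegral_of_forall_isOpen_measure_le_liminf_measure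
    (f := fun x => dist x z ^ 2) (by fun_prop) (fun x => sq_nonneg _) hopen
  simp only [hsq] at hlsc
  exact hlsc.trans (liminf_le_of_frequently_le' hμ.frequently)

end Moments

section Convergence

variable {X : Type*} [PseudoMetricSpace X] [MeasurableSpace X] [BorelSpace X]
  {μ : ℕ → Measure X} {ν : Measure X} [∀ i, IsProbabilityMeasure (μ i)] [IsProbabilityMeasure ν]

lemma exists_eventually_one_lt_sum_min_add
    (hopen : ∀ G, IsOpen G → ν G ≤ atTop.liminf fun i => μ i G) {c : ℕ → Set X}
    (hc : ∀ n, MeasurableSet (c n)) (hdisj : Pairwise (Disjoint on c)) (hcover : ⋃ n, c n = univ)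
    (hfr : ∀ n, ν (frontier (c n)) = 0) {E : ℝ≥0∞} (hE : E ≠ 0) :
    ∃ K, ∀ᶠ i in atTop, 1 < ∑ k ∈ Finset.range K, min (μ i (c k)) (ν (c k)) + E := by
  have hsum : Tendsto (fun K => ∑ k ∈ Finset.range K, ν (c k)) atTop (𝓝 1) := by
    rw [← measure_univ (μ := ν), ← hcover, measure_iUnion hdisj hc]
    exact ENNReal.tendsto_nat_tsum _
  obtain ⟨K, hK⟩ := ((hsum.add tendsto_const_nhds).eventually
    (eventually_gt_nhds (ENNReal.lt_add_right ENNReal.one_ne_top hE))).exists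
  have hmin : Tendsto (fun i => ∑ k ∈ Finset.range K, min (μ i (c k)) (ν (c k)) + E) atTop
      (𝓝 (∑ k ∈ Finset.range K, ν (c k) + E)) := by
    refine (tendsto_finsetSum _ fun k _ => ?_).add tendsto_const_nhds
    simpa only [min_self] using
      (tendsto_measure_of_null_frontier hopen (hfr k)).min (tendsto_const_nhds (x := ν (c k)))
  exact ⟨K, hmin.eventually (eventually_gt_nhds hK)⟩

theorem eventually_wassersteinPow_le [TopologicalSpace.SeparableSpace X]
    (hopen : ∀ G, IsOpen G → ν G ≤ atTop.liminf fun i => μ i G) {z : X} {M : ℝ≥0∞}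
    (hμM : ∀ᶠ i in atTop, ∫⁻ x, edist x z ^ 2 ∂μ i ≤ M) (hνM : ∫⁻ x, edist x z ^ 2 ∂ν ≤ M)
    (R : ℝ≥0∞) {p : ℝ} (hp0 : 0 ≤ p) (hp2 : p ≤ 2) {ε : ℝ} (hε : 0 < ε) :
    ∀ᶠ i in atTop, wassersteinPow p (μ i) ν ≤
      ENNReal.ofReal ε ^ p + R ^ p * ENNReal.ofReal ε + R ^ (p - 2) * (4 * M) := by
  have : Nonempty X := nonempty_of_isProbabilityMeasure ν
  obtain ⟨c, hc, hdisj, hcover, hfr, hdiam⟩ :=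
    exists_partition_measure_frontier_eq_zero_ediam_le ν hε
  set E := ENNReal.ofReal ε
  obtain ⟨K, hK⟩ := exists_eventually_one_lt_sum_min_add hopen hc hdisj hcover hfr
    (ENNReal.ofReal_pos.2 hε).ne'
  filter_upwards [hK, hμM] with i hi hMi
  obtain ⟨π, hπ, hmin⟩ := exists_isCoupling_min_le_measure_prod_self (μ := μ i) (ν := ν)
    (by simp) (Finset.range K) hc (hdisj.set_pairwise _)
  have : IsProbabilityMeasure π := ⟨by rw [hπ.measure_univ_fst, measure_univ]⟩
  set B := ⋃ k ∈ Finset.range K, c k ×ˢ c k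
  have hB : MeasurableSet B := Finset.measurableSet_biUnion _ fun k _ => (hc k).prod (hc k)
  have hBE : ∀ q ∈ B, edist q.1 q.2 ≤ E := by
    simp only [B, mem_iUnion₂, mem_prod]
    rintro q ⟨k, -, h₁, h₂⟩
    exact (Metric.edist_le_ediam_of_mem h₁ h₂).trans (hdiam k)
  have hBc : π Bᶜ ≤ E := by
    rw [prob_compl_eq_one_sub hB, tsub_le_iff_right]
    refine hi.le.trans ?_
    rw [add_comm E]
    gcongr
    rw [measure_biUnion_finset (fun j _ k _ hjk => disjoint_prod.2 (Or.inl (hdisj hjk)))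
      fun k _ => (hc k).prod (hc k)]
    exact Finset.sum_le_sum hmin
  calc wassersteinPow p (μ i) ν ≤ ∫⁻ q, edist q.1 q.2 ^ p ∂π := iInf_le_of_le ⟨π, hπ⟩ le_rfl
    _ ≤ E ^ p * π B + R ^ p * π Bᶜ + R ^ (p - 2) * ∫⁻ q, edist q.1 q.2 ^ 2 ∂π :=
        lintegral_edist_rpow_le hB hBE R hp0 hp2
    _ ≤ E ^ p * 1 + R ^ p * E + R ^ (p - 2) * (2 * (M + M)) := by
        gcongr
        · exact prob_le_one
        · exact (hπ.lintegral_edist_sq_le z).trans (by gcongr)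
    _ = E ^ p + R ^ p * E + R ^ (p - 2) * (4 * M) := by ring

end Convergence

lemma tendsto_zero_of_forall_eventually_le {u : ℕ → ℝ≥0∞} {p : ℝ} (hp0 : 0 < p) (hp2 : p < 2)
    {M : ℝ≥0∞} (hM : M ≠ ⊤) (h : ∀ R : ℝ≥0, ∀ ε > 0, ∀ᶠ i in atTop,
      u i ≤ ENNReal.ofReal ε ^ p + (R : ℝ≥0∞) ^ p * ENNReal.ofReal ε + (R : ℝ≥0∞) ^ (p - 2) * M) :
    Tendsto u atTop (𝓝 0) := by
  have hlimsup (R : ℝ≥0) : limsup u atTop ≤ (R : ℝ≥0∞) ^ (p - 2) * M := by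
    have h0 : Tendsto ENNReal.ofReal (𝓝[>] 0) (𝓝 0) := by
      simpa using (ENNReal.continuous_ofReal.tendsto 0).mono_left nhdsWithin_le_nhds
    have hlim : Tendsto (fun ε : ℝ => ENNReal.ofReal ε ^ p + (R : ℝ≥0∞) ^ p * ENNReal.ofReal ε +
        (R : ℝ≥0∞) ^ (p - 2) * M) (𝓝[>] 0) (𝓝 (0 ^ p + (R : ℝ≥0∞) ^ p * 0 + R ^ (p - 2) * M)) :=
      (((ENNReal.continuous_rpow_const.tendsto 0).comp h0).add
      (ENNReal.Tendsto.const_mul h0 (Or.inr (ENNReal.rpow_ne_top_of_nonneg hp0.le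
        ENNReal.coe_ne_top)))).add tendsto_const_nhds
    simp only [ENNReal.zero_rpow_of_pos hp0, mul_zero, zero_add] at hlim
    exact ge_of_tendsto hlim (eventually_nhdsWithin_of_forall fun ε hε =>
      limsup_le_of_le (by isBoundedDefault) (h R ε hε))
  have hR : Tendsto (fun R : ℝ≥0 => (R : ℝ≥0∞) ^ (p - 2) * M) atTop (𝓝 0) := by
    have := ENNReal.Tendsto.mul_const
      (((ENNReal.continuous_rpow_const (y := p - 2)).tendsto ⊤).comp
        (ENNReal.tendsto_coe_nhds_top.2 tendsto_id)) (Or.inr hM)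
    simpa [ENNReal.top_rpow_of_neg (by linarith : p - 2 < 0)] using this
  exact tendsto_of_le_liminf_of_limsup_le bot_le (ge_of_tendsto hR (Eventually.of_forall hlimsup))

theorem stmt1_general {X : Type*} [MetricSpace X]
    [TopologicalSpace.SeparableSpace X] [MeasurableSpace X] [BorelSpace X]
    (μ : ℕ → Measure X) (ν : Measure X)
    (hμ : ∀ i, IsProbabilityMeasure (μ i)) (hν : IsProbabilityMeasure ν)
    (hweak : ∀ f : BoundedContinuousFunction X ℝ,
      Tendsto (fun i => ∫ x, f x ∂(μ i)) atTop (nhds (∫ x, f x ∂ν)))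
    (C : ℝ≥0∞) (hC : C ≠ ⊤) (hvar : ∀ i, var2 (μ i) (μ i) ≤ C) :
    ∀ p : ℝ, 1 ≤ p → p < 2 →
      Tendsto (fun i => wassersteinPow p (μ i) ν) atTop (nhds 0) := by
  intro p hp1 hp2
  have hopen (G : Set X) (hG : IsOpen G) : ν G ≤ atTop.liminf fun i => μ i G :=
    ProbabilityMeasure.le_liminf_measure_open_of_tendsto (μs := fun i => ⟨μ i, hμ i⟩)
      (μ := ⟨ν, hν⟩) (ProbabilityMeasure.tendsto_iff_forall_integral_tendsto.2 hweak) hG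
  obtain ⟨z, M, hM, hμM, hνM⟩ := exists_eventually_lintegral_edist_sq_le hopen hC hvar
  exact tendsto_zero_of_forall_eventually_le (by linarith) hp2 (M := 4 * M) (by finiteness)
    fun R ε hε => eventually_wassersteinPow_le hopen hμM hνM R (by linarith) hp2.le hε

/-- If `μ i` converge weakly to `ν` on a complete separable metric space and have uniformly
bounded variance, then `W_p(μ i, ν)^p → 0` for every `p ∈ [1, 2)`. -/
theorem stmt1 {X : Type*} [MetricSpace X] [CompleteSpace X]
    [TopologicalSpace.SeparableSpace X] [MeasurableSpace X] [BorelSpace X]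
    (μ : ℕ → Measure X) (ν : Measure X)
    (hμ : ∀ i, IsProbabilityMeasure (μ i)) (hν : IsProbabilityMeasure ν)
    (hweak : ∀ f : BoundedContinuousFunction X ℝ,
      Tendsto (fun i => ∫ x, f x ∂(μ i)) atTop (nhds (∫ x, f x ∂ν)))
    (C : ℝ≥0∞) (hC : C ≠ ⊤) (hvar : ∀ i, var2 (μ i) (μ i) ≤ C) :
    ∀ p : ℝ, 1 ≤ p → p < 2 →
      Tendsto (fun i => wassersteinPow p (μ i) ν) atTop (nhds 0) :=
  stmt1_general μ ν hμ hν hweak C hC hvar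
end

section
/- Let (X, d) be a complete separable metric space, let (μ_i)_{i∈ℕ} be Borel probability measures on X converging weakly to a Borel probability measure μ on X, and let C < ∞ and x_i ∈ X satisfy ∫_X d(x_i, y)² dμ_i(y) ≤ C for every i. Then the sequence (x_i) is bounded: for every x₀ ∈ X one has sup_i d(x₀, x_i) < ∞. -/
/-!
Weak convergence keeps mass on a fixed ball: if `ν (ball x₀ R) > m > 0`, the portmanteau theorem
gives `μ i (ball x₀ R) > m` for all large `i`. By Chebyshev, the second-moment bound `C` then
forces `x i` within distance `r` of some point of that ball as soon as `C < r² m`, so eventually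
`dist x₀ (x i) < R + r`, and the finitely many remaining terms are bounded anyway.
-/

open MeasureTheory Filter
open scoped ENNReal NNReal

theorem Metric.exists_measure_ball_pos {X : Type*} [PseudoMetricSpace X] [MeasurableSpace X]
    (μ : Measure X) [NeZero μ] (x₀ : X) : ∃ R : ℝ, 0 < μ (Metric.ball x₀ R) := by
  by_contra! h
  have hnull : μ (⋃ n : ℕ, Metric.ball x₀ n) = 0 :=
    measure_iUnion_null fun n => nonpos_iff_eq_zero.mp (h n)
  rw [Metric.iUnion_ball_nat, Measure.measure_univ_eq_zero] at hnull
  exact NeZero.ne μ hnull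

section SecondMoment

variable {X : Type*} [MeasurableSpace X] {μ : Measure X} {x : X} {C : ℝ≥0∞}

theorem exists_mem_edist_lt_of_lintegral_edist_sq_le [PseudoEMetricSpace X]
    [OpensMeasurableSpace X] {s : Set X} {r : ℝ≥0∞}
    (hx : ∫⁻ y, edist x y ^ 2 ∂μ ≤ C) (hC : C < r ^ 2 * μ s) : ∃ y ∈ s, edist x y < r := by
  by_contra! hfar
  have hsub : s ⊆ {y | r ^ 2 ≤ edist x y ^ 2} := fun y hy => pow_le_pow_left' (hfar y hy) 2
  have hmeas : Measurable fun y => edist x y ^ 2 :=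
    (continuous_const.edist continuous_id).measurable.pow_const 2
  have hcheb := mul_meas_ge_le_lintegral hmeas (r ^ 2) (μ := μ)
  have hmono : r ^ 2 * μ s ≤ r ^ 2 * μ {y | r ^ 2 ≤ edist x y ^ 2} := by gcongr
  exact hC.not_ge (hmono.trans (hcheb.trans hx))

theorem dist_lt_of_lintegral_edist_sq_le [PseudoMetricSpace X] [OpensMeasurableSpace X]
    {x₀ : X} {R : ℝ} {r : ℝ≥0} (hx : ∫⁻ y, edist x y ^ 2 ∂μ ≤ C)
    (hC : C < (r : ℝ≥0∞) ^ 2 * μ (Metric.ball x₀ R)) : dist x₀ x < R + r := by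
  obtain ⟨y, hy, hxy⟩ := exists_mem_edist_lt_of_lintegral_edist_sq_le hx hC
  have hyx : dist y x < r := by
    rw [dist_comm]
    exact_mod_cast edist_lt_coe.mp hxy
  calc dist x₀ x ≤ dist x₀ y + dist y x := dist_triangle _ _ _
    _ < R + r := add_lt_add (by rwa [dist_comm]) hyx

end SecondMoment

theorem stmt2_general {X : Type*} [MetricSpace X] [MeasurableSpace X] [BorelSpace X]
    (μ : ℕ → Measure X) (ν : Measure X)
    (hμ : ∀ i, IsProbabilityMeasure (μ i)) (hν : IsProbabilityMeasure ν)
    (hweak : ∀ f : BoundedContinuousFunction X ℝ,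
      Tendsto (fun i => ∫ x, f x ∂(μ i)) atTop (nhds (∫ x, f x ∂ν)))
    (C : ℝ≥0∞) (hC : C ≠ ⊤) (x : ℕ → X)
    (hx : ∀ i, ∫⁻ y, edist (x i) y ^ 2 ∂(μ i) ≤ C) :
    ∀ x₀ : X, ∃ B : ℝ, ∀ i, dist x₀ (x i) ≤ B := by
  intro x₀
  let P : ℕ → ProbabilityMeasure X := fun i => ⟨μ i, hμ i⟩
  let Q : ProbabilityMeasure X := ⟨ν, hν⟩
  have hlim : Tendsto P atTop (nhds Q) :=
    ProbabilityMeasure.tendsto_iff_forall_integral_tendsto.mpr hweak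
  obtain ⟨R, hR⟩ := Metric.exists_measure_ball_pos ν x₀
  obtain ⟨m, hm, hmR⟩ := exists_between hR
  have hball : ∀ᶠ i in atTop, m < μ i (Metric.ball x₀ R) := eventually_lt_of_lt_liminf <|
    hmR.trans_le (ProbabilityMeasure.le_liminf_measure_open_of_tendsto hlim Metric.isOpen_ball)
  obtain ⟨n, hn⟩ := ENNReal.exists_nat_mul_gt hm.ne' hC
  have hdist : ∀ᶠ i in atTop, dist x₀ (x i) ≤ R + n := hball.mono fun i hi => by
    refine (dist_lt_of_lintegral_edist_sq_le (r := n) (hx i) ?_).le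
    calc C < n * m := hn
      _ ≤ (n : ℝ≥0∞) ^ 2 * μ i (Metric.ball x₀ R) := by
        gcongr
        exact_mod_cast Nat.le_self_pow two_ne_zero n
  obtain ⟨B, hB⟩ := (isBoundedUnder_of_eventually_le hdist).bddAbove_range
  exact ⟨B, fun i => hB ⟨i, rfl⟩⟩

/-- If `μ i` converge weakly to `ν` on a complete separable metric space, and the points
`x i` have uniformly bounded second moment with respect to `μ i`, then the sequence
`(x i)` is bounded. -/
theorem stmt2 {X : Type*} [MetricSpace X] [CompleteSpace X]
    [TopologicalSpace.SeparableSpace X] [MeasurableSpace X] [BorelSpace X]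
    (μ : ℕ → Measure X) (ν : Measure X)
    (hμ : ∀ i, IsProbabilityMeasure (μ i)) (hν : IsProbabilityMeasure ν)
    (hweak : ∀ f : BoundedContinuousFunction X ℝ,
      Tendsto (fun i => ∫ x, f x ∂(μ i)) atTop (nhds (∫ x, f x ∂ν)))
    (C : ℝ≥0∞) (hC : C ≠ ⊤) (x : ℕ → X)
    (hx : ∀ i, ∫⁻ y, edist (x i) y ^ 2 ∂(μ i) ≤ C) :
    ∀ x₀ : X, ∃ B : ℝ, ∀ i, dist x₀ (x i) ≤ B :=
  stmt2_general μ ν hμ hν hweak C hC x hx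
end

section
/- Let (X, d) be a metric space, τ > 0, and let ν be a Borel probability measure on X satisfying the Gaussian moment-generating bound at scale τ. Suppose H > 0 and z ∈ X satisfy ∫_X d(z, x)² dν(x) ≤ Hτ. Then for every r ≥ 0, ν({x ∈ X : d(x, z) ≥ √(Hτ) + r}) ≤ exp(−r²/(4τ)). -/
/-!
Truncating `d(·, z)` at the level `C = √(Hτ) + r` gives a bounded 1-Lipschitz function `f` which
equals `C` on the set in question. As `0 ≤ f ≤ d(z, ·)`, Cauchy–Schwarz bounds the mean of `f` by
`√(Hτ)`, so the centered function `f - ∫ f` is at least `r` on that set. Chernoff's inequality with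
the moment-generating bound at `λ = r / (2τ)` then gives `exp (τλ² - λr) = exp (-r² / (4τ))`.
-/

open MeasureTheory ProbabilityTheory Real
open scoped ENNReal

lemma sq_integral_le_integral_sq {Ω : Type*} [MeasurableSpace Ω] {μ : Measure Ω}
    [IsProbabilityMeasure μ] {f : Ω → ℝ} (hf : MemLp f 2 μ) :
    (∫ ω, f ω ∂μ) ^ 2 ≤ ∫ ω, f ω ^ 2 ∂μ := by
  have := variance_nonneg f μ
  rw [variance_eq_sub hf] at this
  simpa using this

lemma sqrt_toReal_ofReal (B : ℝ) : √(ENNReal.ofReal B).toReal = √B := by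
  rcases le_total B 0 with hB | hB
  · rw [ENNReal.ofReal_of_nonpos hB, Real.sqrt_eq_zero'.2 hB, ENNReal.toReal_zero, Real.sqrt_zero]
  · rw [ENNReal.toReal_ofReal hB]

lemma integral_le_sqrt_of_abs_le_dist {X : Type*} [PseudoMetricSpace X] [MeasurableSpace X]
    {ν : Measure X} [IsProbabilityMeasure ν] {f : X → ℝ} {z : X} {B : ℝ} (hf : MemLp f 2 ν)
    (hfz : ∀ x, |f x| ≤ dist z x) (hB : ∫⁻ x, edist z x ^ 2 ∂ν ≤ ENNReal.ofReal B) :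
    ∫ x, f x ∂ν ≤ √B := by
  have hsq : ∫ x, f x ^ 2 ∂ν ≤ (ENNReal.ofReal B).toReal := by
    rw [integral_eq_lintegral_of_nonneg_ae (.of_forall fun x => sq_nonneg _)
      (hf.aestronglyMeasurable.pow 2)]
    refine ENNReal.toReal_mono ENNReal.ofReal_ne_top (le_trans (lintegral_mono fun x => ?_) hB)
    rw [edist_dist, ← sq_abs, ENNReal.ofReal_pow (abs_nonneg _)]
    gcongr
    exact hfz x
  calc ∫ x, f x ∂ν ≤ |∫ x, f x ∂ν| := le_abs_self _
    _ ≤ √B := by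
      rw [← sqrt_toReal_ofReal]
      exact Real.abs_le_sqrt ((sq_integral_le_integral_sq hf).trans hsq)

lemma measureReal_ge_le_exp_of_mgf_le {Ω : Type*} [MeasurableSpace Ω] {μ : Measure Ω}
    [IsProbabilityMeasure μ] {X : Ω → ℝ} {τ r : ℝ} (hτ : 0 < τ) (hr : 0 ≤ r)
    (hint : ∀ l, 0 < l → Integrable (fun ω => exp (l * X ω)) μ)
    (hmgf : ∀ l, 0 < l → mgf X μ l ≤ exp (τ * l ^ 2)) :
    μ.real {ω | r ≤ X ω} ≤ exp (-r ^ 2 / (4 * τ)) := by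
  rcases hr.eq_or_lt with rfl | hr
  · simp [measureReal_le_one]
  have hl : 0 < r / (2 * τ) := by positivity
  calc μ.real {ω | r ≤ X ω}
      ≤ exp (-(r / (2 * τ)) * r) * mgf X μ (r / (2 * τ)) :=
        measure_ge_le_exp_mul_mgf r hl.le (hint _ hl)
    _ ≤ exp (-(r / (2 * τ)) * r) * exp (τ * (r / (2 * τ)) ^ 2) := by gcongr; exact hmgf _ hl
    _ = exp (-r ^ 2 / (4 * τ)) := by
      rw [← exp_add]
      congr 1
      field_simp
      ring

def SatisfiesGaussianMGFBound {X : Type*} [PseudoMetricSpace X] [MeasurableSpace X]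
    (ν : Measure X) (τ : ℝ) : Prop :=
  ∀ h : X → ℝ, LipschitzWith 1 h → (∃ M : ℝ, ∀ x, |h x| ≤ M) →
    (∫ x, h x ∂ν) = 0 → ∀ l : ℝ, 0 < l → ∫ x, exp (l * h x) ∂ν ≤ exp (τ * l ^ 2)

lemma SatisfiesGaussianMGFBound.measureReal_integral_add_le {X : Type*} [PseudoMetricSpace X]
    [MeasurableSpace X] [OpensMeasurableSpace X] {ν : Measure X} [IsProbabilityMeasure ν] {τ : ℝ}
    (hν : SatisfiesGaussianMGFBound ν τ) (hτ : 0 < τ) {f : X → ℝ} (hf : LipschitzWith 1 f)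
    {M : ℝ} (hM : ∀ x, |f x| ≤ M) {r : ℝ} (hr : 0 ≤ r) :
    ν.real {x | ∫ y, f y ∂ν + r ≤ f x} ≤ exp (-r ^ 2 / (4 * τ)) := by
  have hf_meas : Measurable f := hf.continuous.measurable
  set m := ∫ y, f y ∂ν
  set h : X → ℝ := fun x => f x - m
  have h_bdd : ∀ x, |h x| ≤ M + |m| := fun x => (abs_sub _ _).trans (by gcongr; exact hM x)
  have h_mean : ∫ x, h x ∂ν = 0 := by
    have hf_int : Integrable f ν := .of_bound hf_meas.aestronglyMeasurable M (.of_forall hM)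
    simp [h, integral_sub hf_int (integrable_const m), m]
  have h_int (l : ℝ) (hl : 0 < l) : Integrable (fun x => exp (l * h x)) ν :=
    integrable_exp_mul_of_le l (M + |m|) hl.le (hf_meas.sub_const m).aemeasurable
      (.of_forall fun x => (le_abs_self _).trans (h_bdd x))
  have h_lip : LipschitzWith 1 h := by simpa using hf.sub (LipschitzWith.const m)
  convert measureReal_ge_le_exp_of_mgf_le hτ hr h_int (hν h h_lip ⟨_, h_bdd⟩ h_mean) using 3
  exact funext fun x => propext le_sub_iff_add_le'.symm

theorem stmt3_general {X : Type*} [MetricSpace X] [MeasurableSpace X] [BorelSpace X]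
    (τ : ℝ) (hτ : 0 < τ) (ν : Measure X) (hν : IsProbabilityMeasure ν)
    (hGauss : ∀ h : X → ℝ, LipschitzWith 1 h → (∃ M : ℝ, ∀ x, |h x| ≤ M) →
      (∫ x, h x ∂ν) = 0 → ∀ l : ℝ, 0 < l →
        ∫ x, Real.exp (l * h x) ∂ν ≤ Real.exp (τ * l ^ 2))
    (H : ℝ) (z : X)
    (hz : ∫⁻ x, edist z x ^ 2 ∂ν ≤ ENNReal.ofReal (H * τ)) :
    ∀ r : ℝ, 0 ≤ r →
      ν {x | Real.sqrt (H * τ) + r ≤ dist x z} ≤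
        ENNReal.ofReal (Real.exp (-(r ^ 2) / (4 * τ))) := by
  intro r hr
  set C := √(H * τ) + r
  have hC : 0 ≤ C := by positivity
  set f : X → ℝ := fun x => min (dist x z) C
  have hf_lip : LipschitzWith 1 f := by
    simpa using (LipschitzWith.dist_left z).min (LipschitzWith.const C)
  have hf_mem : ∀ x, f x ∈ Set.Icc 0 C := fun x => ⟨le_min dist_nonneg hC, min_le_right _ _⟩
  have hf_abs : ∀ x, |f x| ≤ C := fun x => abs_le.2 ⟨by linarith [(hf_mem x).1], (hf_mem x).2⟩
  have hm : ∫ x, f x ∂ν ≤ √(H * τ) := integral_le_sqrt_of_abs_le_dist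
    (memLp_of_bounded (.of_forall hf_mem) hf_lip.continuous.aestronglyMeasurable 2)
    (fun x => by rw [abs_of_nonneg (hf_mem x).1, dist_comm]; exact min_le_left _ _) hz
  have h_sub : {x | √(H * τ) + r ≤ dist x z} ⊆ {x | ∫ y, f y ∂ν + r ≤ f x} :=
    fun x (hx : C ≤ dist x z) => by
      show _ ≤ min (dist x z) C
      rw [min_eq_right hx]
      linarith
  calc ν {x | √(H * τ) + r ≤ dist x z} ≤ ν {x | ∫ y, f y ∂ν + r ≤ f x} := measure_mono h_sub
    _ = ENNReal.ofReal (ν.real {x | ∫ y, f y ∂ν + r ≤ f x}) := (ofReal_measureReal).symm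
    _ ≤ _ := ENNReal.ofReal_le_ofReal
      (SatisfiesGaussianMGFBound.measureReal_integral_add_le hGauss hτ hf_lip hf_abs hr)

/-- Gaussian concentration for measures satisfying the Gaussian moment-generating bound:
if `ν` satisfies `∫ exp(λh) dν ≤ exp(τλ²)` for every bounded `1`-Lipschitz `h` with
`∫ h dν = 0` and every `λ > 0`, and `z` satisfies `∫ d(z,·)² dν ≤ Hτ`, then for every
`r ≥ 0` we have `ν({d(·,z) ≥ √(Hτ) + r}) ≤ exp(−r²/(4τ))`. -/
theorem stmt3 {X : Type*} [MetricSpace X] [MeasurableSpace X] [BorelSpace X]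
    (τ : ℝ) (hτ : 0 < τ) (ν : Measure X) (hν : IsProbabilityMeasure ν)
    (hGauss : ∀ h : X → ℝ, LipschitzWith 1 h → (∃ M : ℝ, ∀ x, |h x| ≤ M) →
      (∫ x, h x ∂ν) = 0 → ∀ l : ℝ, 0 < l →
        ∫ x, Real.exp (l * h x) ∂ν ≤ Real.exp (τ * l ^ 2))
    (H : ℝ) (hH : 0 < H) (z : X)
    (hz : ∫⁻ x, edist z x ^ 2 ∂ν ≤ ENNReal.ofReal (H * τ)) :
    ∀ r : ℝ, 0 ≤ r →
      ν {x | Real.sqrt (H * τ) + r ≤ dist x z} ≤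
        ENNReal.ofReal (Real.exp (-(r ^ 2) / (4 * τ))) :=
  stmt3_general τ hτ ν hν hGauss H z hz
end

section
/- Under hypotheses (W1)–(W4), for every ε ∈ (0, ε₀] the spacetime distances d* and d^{*,ε} are equivalent: d*(x, y) ≤ d^{*,ε}(x, y) ≤ (ε₀/ε) · d*(x, y) for all x, y ∈ X. -/
/-- The hypotheses (W1)–(W4) (together with nonnegativity and the range condition on the
time function `𝔱 : X → [a, 0]`) for an assignment `W` of "Wasserstein distances between
conjugate heat kernel measures": `W x y t` is defined (i.e. the axioms are imposed) for
`t ∈ [a, min (𝔱 x) (𝔱 y)]`. -/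
structure WAxioms {X : Type*} (a : ℝ) (𝔱 : X → ℝ) (W : X → X → ℝ → ℝ) : Prop where
  time_mem : ∀ x, 𝔱 x ∈ Set.Icc a 0
  nonneg : ∀ x y, ∀ t ∈ Set.Icc a (min (𝔱 x) (𝔱 y)), 0 ≤ W x y t
  symm : ∀ x y, ∀ t ∈ Set.Icc a (min (𝔱 x) (𝔱 y)), W x y t = W y x t
  self : ∀ x, ∀ t ∈ Set.Icc a (𝔱 x), W x x t = 0
  triangle : ∀ x y z, ∀ t ∈ Set.Icc a (min (𝔱 x) (min (𝔱 y) (𝔱 z))),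
      W x z t ≤ W x y t + W y z t
  mono : ∀ x y, MonotoneOn (W x y) (Set.Icc a (min (𝔱 x) (𝔱 y)))
  cont : ∀ x y, ContinuousOn (W x y) (Set.Icc a (min (𝔱 x) (𝔱 y)))

/-- The defining set of radii for the spacetime distance between `x` and `y`:
with `t = max(𝔱 x, 𝔱 y)` and `s = min(𝔱 x, 𝔱 y)`, the set of
`r ∈ [√(t−s), √(t−a))` with `W x y (t − r²) ≤ ε r`. -/
def dstarSet {X : Type*} (a ε : ℝ) (𝔱 : X → ℝ) (W : X → X → ℝ → ℝ) (x y : X) : Set ℝ :=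
  { r : ℝ | Real.sqrt (max (𝔱 x) (𝔱 y) - min (𝔱 x) (𝔱 y)) ≤ r ∧
      r < Real.sqrt (max (𝔱 x) (𝔱 y) - a) ∧
      W x y (max (𝔱 x) (𝔱 y) - r ^ 2) ≤ ε * r }

open Classical in
/-- The spacetime distance `d*` associated to `W` (with parameter `ε`): the infimum of the
set `dstarSet` if it is nonempty, and `ε⁻¹ W(x, y; a)` otherwise. -/
noncomputable def dstar {X : Type*} (a ε : ℝ) (𝔱 : X → ℝ) (W : X → X → ℝ → ℝ) (x y : X) : ℝ :=
  if (dstarSet a ε 𝔱 W x y).Nonempty then sInf (dstarSet a ε 𝔱 W x y)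
  else ε⁻¹ * W x y a

/-!
Write `T = max(𝔱 x, 𝔱 y)`, `S = min(𝔱 x, 𝔱 y)` and `D_ε` for the set of admissible radii.
Radii are nonnegative, so `D_ε ⊆ D_ε₀`; since `W(x, y; ·)` is nondecreasing, `r ∈ D_ε₀` gives
`(ε₀/ε) r ∈ D_ε` as long as this stays below `√(T − a)`; this gives both inequalities when `D_ε` is nonempty. When `D_ε` is
empty, continuity of `W` at time `a` gives `ε √(T − a) ≤ W(x, y; a)`, so the fallback value
`ε⁻¹ W(x, y; a)` lies above every element of `D_ε₀`; conversely monotonicity bounds every element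
of `D_ε₀` below by `ε₀⁻¹ W(x, y; a)`.
-/

open Filter Topology

section dstar

variable {X : Type*} {a : ℝ} {𝔱 : X → ℝ} {W : X → X → ℝ → ℝ} {x y : X} {ε ε' r : ℝ}

theorem nonneg_of_mem_dstarSet (hr : r ∈ dstarSet a ε 𝔱 W x y) : 0 ≤ r :=
  (Real.sqrt_nonneg _).trans hr.1

theorem sq_lt_of_mem_dstarSet (hr : r ∈ dstarSet a ε 𝔱 W x y) :
    r ^ 2 < max (𝔱 x) (𝔱 y) - a :=
  (Real.lt_sqrt (nonneg_of_mem_dstarSet hr)).1 hr.2.1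

theorem time_mem_of_mem_dstarSet (hr : r ∈ dstarSet a ε 𝔱 W x y) :
    max (𝔱 x) (𝔱 y) - r ^ 2 ∈ Set.Icc a (min (𝔱 x) (𝔱 y)) := by
  have hlow := (Real.sqrt_le_left (nonneg_of_mem_dstarSet hr)).1 hr.1
  have hup := sq_lt_of_mem_dstarSet hr
  constructor <;> linarith

theorem lt_min_of_dstarSet_nonempty (h : (dstarSet a ε 𝔱 W x y).Nonempty) :
    a < min (𝔱 x) (𝔱 y) := by
  obtain ⟨r, hr⟩ := h
  have := (Real.sqrt_lt_sqrt_iff (sub_nonneg.2 min_le_max)).1 (hr.1.trans_lt hr.2.1)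
  linarith

theorem dstarSet_subset_of_le (h : ε ≤ ε') :
    dstarSet a ε 𝔱 W x y ⊆ dstarSet a ε' 𝔱 W x y := fun _ hr =>
  ⟨hr.1, hr.2.1, hr.2.2.trans (mul_le_mul_of_nonneg_right h (nonneg_of_mem_dstarSet hr))⟩

theorem dstarSet_bddBelow : BddBelow (dstarSet a ε 𝔱 W x y) :=
  ⟨0, fun _ => nonneg_of_mem_dstarSet⟩

theorem dstar_eq_sInf (h : (dstarSet a ε 𝔱 W x y).Nonempty) :
    dstar a ε 𝔱 W x y = sInf (dstarSet a ε 𝔱 W x y) := if_pos h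

theorem dstar_eq_inv_mul (h : ¬(dstarSet a ε 𝔱 W x y).Nonempty) :
    dstar a ε 𝔱 W x y = ε⁻¹ * W x y a := if_neg h

theorem dstar_lt_sqrt (h : (dstarSet a ε 𝔱 W x y).Nonempty) :
    dstar a ε 𝔱 W x y < Real.sqrt (max (𝔱 x) (𝔱 y) - a) := by
  obtain ⟨r, hr⟩ := h
  rw [dstar_eq_sInf ⟨r, hr⟩]
  exact (csInf_le dstarSet_bddBelow hr).trans_lt hr.2.1

variable (hW : WAxioms a 𝔱 W)
include hW

theorem WAxioms.le_min_time : a ≤ min (𝔱 x) (𝔱 y) :=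
  le_min (hW.time_mem x).1 (hW.time_mem y).1

theorem WAxioms.inv_mul_le_of_mem_dstarSet (hε : 0 < ε) (hr : r ∈ dstarSet a ε 𝔱 W x y) :
    ε⁻¹ * W x y a ≤ r := by
  have hWa : W x y a ≤ W x y (max (𝔱 x) (𝔱 y) - r ^ 2) :=
    hW.mono x y ⟨le_rfl, hW.le_min_time⟩ (time_mem_of_mem_dstarSet hr)
      (time_mem_of_mem_dstarSet hr).1
  rw [inv_mul_le_iff₀ hε]
  exact hWa.trans hr.2.2

theorem WAxioms.inv_mul_le_dstar (hε : 0 < ε) : ε⁻¹ * W x y a ≤ dstar a ε 𝔱 W x y := by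
  by_cases h : (dstarSet a ε 𝔱 W x y).Nonempty
  · rw [dstar_eq_sInf h]
    exact le_csInf h fun _ => hW.inv_mul_le_of_mem_dstarSet hε
  · exact (dstar_eq_inv_mul h).ge

/-- When `D_ε` is empty, every `u ∈ (a, S]` violates the admissibility condition for the radius
`√(T − u)`; letting `u → a` uses the continuity of `W`. -/
theorem WAxioms.mul_sqrt_le_of_not_nonempty (h : ¬(dstarSet a ε 𝔱 W x y).Nonempty)
    (haS : a < min (𝔱 x) (𝔱 y)) : ε * Real.sqrt (max (𝔱 x) (𝔱 y) - a) ≤ W x y a := by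
  set T := max (𝔱 x) (𝔱 y)
  set S := min (𝔱 x) (𝔱 y)
  have hviolated : ∀ u ∈ Set.Ioc a S, ε * Real.sqrt (T - u) ≤ W x y u := by
    intro u hu
    have hTu : 0 ≤ T - u := by linarith [hu.2, (min_le_max : S ≤ T)]
    by_contra hlt
    refine h ⟨Real.sqrt (T - u), Real.sqrt_le_sqrt (by linarith [hu.2]),
      Real.sqrt_lt_sqrt hTu (by linarith [hu.1]), ?_⟩
    rw [Real.sq_sqrt hTu, sub_sub_cancel]
    exact (not_le.1 hlt).le
  have hW_lim : Tendsto (W x y) (𝓝[>] a) (𝓝 (W x y a)) :=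
    ((hW.cont x y a ⟨le_rfl, haS.le⟩).mono_of_mem_nhdsWithin (Icc_mem_nhdsGT haS)).tendsto
  have hsqrt_lim : Tendsto (fun u => ε * Real.sqrt (T - u)) (𝓝[>] a)
      (𝓝 (ε * Real.sqrt (T - a))) :=
    (Continuous.tendsto (by fun_prop) a).mono_left nhdsWithin_le_nhds
  exact le_of_tendsto_of_tendsto hsqrt_lim hW_lim
    (eventually_of_mem (Ioc_mem_nhdsGT haS) hviolated)

theorem WAxioms.sqrt_le_dstar_of_not_nonempty (hε : 0 < ε)
    (h : ¬(dstarSet a ε 𝔱 W x y).Nonempty) (haS : a < min (𝔱 x) (𝔱 y)) :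
    Real.sqrt (max (𝔱 x) (𝔱 y) - a) ≤ dstar a ε 𝔱 W x y := by
  rw [dstar_eq_inv_mul h, le_inv_mul_iff₀ hε]
  exact hW.mul_sqrt_le_of_not_nonempty h haS

theorem WAxioms.div_mul_mem_dstarSet (hε : 0 < ε) (hεε' : ε ≤ ε')
    (hr : r ∈ dstarSet a ε' 𝔱 W x y) (hlt : ε' / ε * r < Real.sqrt (max (𝔱 x) (𝔱 y) - a)) :
    ε' / ε * r ∈ dstarSet a ε 𝔱 W x y := by
  have hr0 := nonneg_of_mem_dstarSet hr
  have hrr : r ≤ ε' / ε * r := le_mul_of_one_le_left hr0 ((one_le_div hε).2 hεε')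
  have hsq : (ε' / ε * r) ^ 2 < max (𝔱 x) (𝔱 y) - a :=
    (Real.lt_sqrt (hr0.trans hrr)).1 hlt
  have hsq_mono : r ^ 2 ≤ (ε' / ε * r) ^ 2 := pow_le_pow_left₀ hr0 hrr 2
  have htime := time_mem_of_mem_dstarSet hr
  refine ⟨hr.1.trans hrr, hlt, ?_⟩
  calc W x y (max (𝔱 x) (𝔱 y) - (ε' / ε * r) ^ 2)
      ≤ W x y (max (𝔱 x) (𝔱 y) - r ^ 2) :=
        hW.mono x y ⟨by linarith, by linarith [htime.2]⟩ htime (by linarith)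
    _ ≤ ε' * r := hr.2.2
    _ = ε * (ε' / ε * r) := by field_simp

theorem WAxioms.dstar_le_dstar (hε : 0 < ε) (hεε' : ε ≤ ε') :
    dstar a ε' 𝔱 W x y ≤ dstar a ε 𝔱 W x y := by
  by_cases h' : (dstarSet a ε' 𝔱 W x y).Nonempty
  · by_cases h : (dstarSet a ε 𝔱 W x y).Nonempty
    · rw [dstar_eq_sInf h', dstar_eq_sInf h]
      exact csInf_le_csInf dstarSet_bddBelow h (dstarSet_subset_of_le hεε')
    · exact (dstar_lt_sqrt h').le.trans
        (hW.sqrt_le_dstar_of_not_nonempty hε h (lt_min_of_dstarSet_nonempty h'))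
  · calc dstar a ε' 𝔱 W x y = ε'⁻¹ * W x y a := dstar_eq_inv_mul h'
      _ ≤ ε⁻¹ * W x y a :=
        mul_le_mul_of_nonneg_right (inv_anti₀ hε hεε') (hW.nonneg x y a ⟨le_rfl, hW.le_min_time⟩)
      _ ≤ dstar a ε 𝔱 W x y := hW.inv_mul_le_dstar hε

theorem WAxioms.dstar_le_div_mul_dstar (hε : 0 < ε) (hεε' : ε ≤ ε') :
    dstar a ε 𝔱 W x y ≤ ε' / ε * dstar a ε' 𝔱 W x y := by
  have hε' : 0 < ε' := hε.trans_le hεε'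
  by_cases h : (dstarSet a ε 𝔱 W x y).Nonempty
  · have h' := h.mono (dstarSet_subset_of_le hεε')
    rw [dstar_eq_sInf h', ← div_le_iff₀' (div_pos hε' hε)]
    refine le_csInf h' fun r hr => (div_le_iff₀' (div_pos hε' hε)).2 ?_
    by_cases hlt : ε' / ε * r < Real.sqrt (max (𝔱 x) (𝔱 y) - a)
    · rw [dstar_eq_sInf h]
      exact csInf_le dstarSet_bddBelow (hW.div_mul_mem_dstarSet hε hεε' hr hlt)
    · exact (dstar_lt_sqrt h).le.trans (not_lt.1 hlt)
  · calc dstar a ε 𝔱 W x y = ε' / ε * (ε'⁻¹ * W x y a) := by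
          rw [dstar_eq_inv_mul h]; field_simp
      _ ≤ ε' / ε * dstar a ε' 𝔱 W x y :=
        mul_le_mul_of_nonneg_left (hW.inv_mul_le_dstar hε') (div_pos hε' hε).le

end dstar

theorem stmt11_general {X : Type*} (a ε₀ : ℝ)
    (𝔱 : X → ℝ) (W : X → X → ℝ → ℝ) (hW : WAxioms a 𝔱 W)
    (ε : ℝ) (hε : ε ∈ Set.Ioc (0 : ℝ) ε₀) :
    ∀ x y : X,
      dstar a ε₀ 𝔱 W x y ≤ dstar a ε 𝔱 W x y ∧
      dstar a ε 𝔱 W x y ≤ (ε₀ / ε) * dstar a ε₀ 𝔱 W x y :=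
  fun _ _ => ⟨hW.dstar_le_dstar hε.1 hε.2, hW.dstar_le_div_mul_dstar hε.1 hε.2⟩

/-- Under hypotheses (W1)–(W4), for every `ε ∈ (0, ε₀]` the spacetime distances `d*` (with
parameter `ε₀`) and `d^{*,ε}` (with parameter `ε`) are equivalent:
`d* ≤ d^{*,ε} ≤ (ε₀/ε)·d*`. -/
theorem stmt11 {X : Type*} (a ε₀ : ℝ) (ha : a < 0) (hε₀ : ε₀ ∈ Set.Ioc (0 : ℝ) 1)
    (𝔱 : X → ℝ) (W : X → X → ℝ → ℝ) (hW : WAxioms a 𝔱 W)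
    (ε : ℝ) (hε : ε ∈ Set.Ioc (0 : ℝ) ε₀) :
    ∀ x y : X,
      dstar a ε₀ 𝔱 W x y ≤ dstar a ε 𝔱 W x y ∧
      dstar a ε 𝔱 W x y ≤ (ε₀ / ε) * dstar a ε₀ 𝔱 W x y :=
  stmt11_general a ε₀ 𝔱 W hW ε hε
end

section
/- Let J ⊆ ℝ be an interval, M a compact metrizable topological space, (d_t)_{t∈J} a family of metrics on M each inducing the topology of M and depending continuously on t in the bi-Lipschitz sense, and μ, ν : J → (Borel probability measures on M) weakly continuous. Define F(t) := sup{ ∫ f dμ_t − ∫ f dν_t : f : M → ℝ with |f(x) − f(y)| ≤ d_t(x, y) for all x, y ∈ M }. If F is nondecreasing on J, then F is continuous on J. -/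
/-!
Testing against a 1-Lipschitz `f` and rescaling shows that `d' ≤ c • d` implies
`W_{d'}(μ, ν) ≤ c • W_d(μ, ν)`; so bi-Lipschitz convergence of the metrics reduces the claim to the
continuity of `(μ, ν) ↦ W_{d₀}(μ, ν)` under weak convergence, for one fixed metric `d₀`.
Lower semicontinuity comes from testing with a single 1-Lipschitz function. For upper
semicontinuity, note that up to additive constants the 1-Lipschitz functions are uniformly
`2η`-close to finitely many of them, namely the inf-convolutions `x ↦ minᵢ (aᵢ + d₀(x, pᵢ))` over
an `η`-net `(pᵢ)` with values `aᵢ ∈ ηℤ` in a bounded range, and weak convergence is uniform on a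
finite family.
-/

open MeasureTheory Filter Topology

section

variable {M : Type*}

structure IsCompatiblePseudoMetric [TopologicalSpace M] (d : M → M → ℝ) : Prop where
  symm : ∀ x y, d x y = d y x
  self : ∀ x, d x x = 0
  triangle : ∀ x y z, d x z ≤ d x y + d y z
  isOpen_iff : ∀ s : Set M, IsOpen s ↔ ∀ x ∈ s, ∃ ε > 0, ∀ y, d x y < ε → y ∈ s

def OneLipschitz (d : M → M → ℝ) (f : M → ℝ) : Prop :=
  ∀ x y, |f x - f y| ≤ d x y

theorem oneLipschitz_zero {d : M → M → ℝ} (hd : ∀ x y, 0 ≤ d x y) : OneLipschitz d 0 :=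
  fun x y => by simpa using hd x y

namespace IsCompatiblePseudoMetric

variable [TopologicalSpace M] {d : M → M → ℝ}

theorem nonneg (hd : IsCompatiblePseudoMetric d) (x y : M) : 0 ≤ d x y := by
  linarith [hd.triangle x y x, hd.self x, hd.symm x y]

theorem ball_mem_nhds (hd : IsCompatiblePseudoMetric d) (x : M) {r : ℝ} (hr : 0 < r) :
    {y | d x y < r} ∈ 𝓝 x := by
  refine IsOpen.mem_nhds ((hd.isOpen_iff _).2 fun y hy => ?_) (by simp [hd.self, hr])
  refine ⟨r - d x y, sub_pos.2 hy, fun z hz => ?_⟩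
  show d x z < r
  linarith [hd.triangle x y z]

theorem oneLipschitz_left (hd : IsCompatiblePseudoMetric d) (z : M) :
    OneLipschitz d (fun x => d x z) := by
  intro x y
  rw [abs_sub_le_iff]
  constructor <;> linarith [hd.triangle x y z, hd.triangle y x z, hd.symm x y]

end IsCompatiblePseudoMetric

theorem OneLipschitz.continuous [TopologicalSpace M] {d : M → M → ℝ} {f : M → ℝ}
    (hf : OneLipschitz d f) (hd : IsCompatiblePseudoMetric d) : Continuous f :=
  continuous_iff_continuousAt.2 fun x => Metric.tendsto_nhds.2 fun ε hε => by
    filter_upwards [hd.ball_mem_nhds x hε] with y hy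
    rw [Real.dist_eq, abs_sub_comm]
    exact (hf x y).trans_lt hy

namespace IsCompatiblePseudoMetric

variable [TopologicalSpace M] [CompactSpace M] {d : M → M → ℝ}

theorem exists_uniform_bound (hd : IsCompatiblePseudoMetric d) (z : M) :
    ∃ C, ∀ f, OneLipschitz d f → ∀ x, |f x - f z| ≤ C := by
  obtain ⟨C, hC⟩ := (isCompact_range ((hd.oneLipschitz_left z).continuous hd)).bddAbove
  exact ⟨C, fun f hf x => (hf x z).trans (hC ⟨x, rfl⟩)⟩

theorem exists_finset_net (hd : IsCompatiblePseudoMetric d) {η : ℝ} (hη : 0 < η) :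
    ∃ s : Finset M, ∀ x, ∃ p ∈ s, d x p < η := by
  obtain ⟨s, -, hs⟩ := isCompact_univ.elim_nhds_subcover (fun p => {x | d p x < η})
    fun p _ => hd.ball_mem_nhds p hη
  refine ⟨s, fun x => ?_⟩
  obtain ⟨p, hp, hpx⟩ := Set.mem_iUnion₂.1 (hs (Set.mem_univ x))
  exact ⟨p, hp, hd.symm x p ▸ hpx⟩

end IsCompatiblePseudoMetric

section InfConvolution

variable {ι : Type*} [Finite ι] [Nonempty ι] {d : M → M → ℝ}

theorem oneLipschitz_ciInf [TopologicalSpace M] (hd : IsCompatiblePseudoMetric d) (p : ι → M)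
    (a : ι → ℝ) : OneLipschitz d (fun x => ⨅ i, a i + d x (p i)) := by
  have key : ∀ x y, (⨅ i, a i + d x (p i)) ≤ (⨅ i, a i + d y (p i)) + d x y := by
    intro x y
    rw [← sub_le_iff_le_add]
    refine le_ciInf fun i => ?_
    linarith [ciInf_le (Finite.bddBelow_range fun i => a i + d x (p i)) i,
      hd.triangle x y (p i)]
  intro x y
  rw [abs_sub_le_iff]
  constructor <;> linarith [key x y, key y x, hd.symm x y]

theorem OneLipschitz.abs_sub_ciInf_le {f : M → ℝ} (hf : OneLipschitz d f) {p : ι → M}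
    {a : ι → ℝ} {η : ℝ} (hp : ∀ x, ∃ i, d x (p i) < η)
    (ha : ∀ i, f (p i) - η ≤ a i ∧ a i ≤ f (p i)) (x : M) :
    |f x - ⨅ i, a i + d x (p i)| ≤ 2 * η := by
  obtain ⟨i, hi⟩ := hp x
  have hlow : f x - η ≤ ⨅ j, a j + d x (p j) :=
    le_ciInf fun j => by linarith [(ha j).1, (abs_le.1 (hf x (p j))).2]
  have hup := ciInf_le (Finite.bddBelow_range fun j => a j + d x (p j)) i
  rw [abs_sub_le_iff]
  constructor <;> linarith [(ha i).2, (abs_le.1 (hf x (p i))).1, abs_nonneg (f x - f (p i))]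

end InfConvolution

theorem sub_le_mul_floor_div_le {η : ℝ} (hη : 0 < η) (y : ℝ) :
    y - η ≤ η * ⌊y / η⌋ ∧ η * ⌊y / η⌋ ≤ y := by
  have h₁ := (div_lt_iff₀ hη).1 (Int.lt_floor_add_one (y / η))
  have h₂ := (le_div_iff₀ hη).1 (Int.floor_le (y / η))
  constructor <;> nlinarith

theorem IsCompatiblePseudoMetric.exists_finite_approx [TopologicalSpace M] [CompactSpace M]
    [Nonempty M] {d : M → M → ℝ} (hd : IsCompatiblePseudoMetric d) {η : ℝ} (hη : 0 < η) :
    ∃ G : Set (M → ℝ), G.Finite ∧ (∀ g ∈ G, OneLipschitz d g) ∧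
      ∀ f, OneLipschitz d f → ∃ g ∈ G, ∃ c, ∀ x, |f x - c - g x| ≤ 2 * η := by
  obtain ⟨s, hs⟩ := hd.exists_finset_net hη
  obtain ⟨z⟩ := ‹Nonempty M›
  obtain ⟨C, hC⟩ := hd.exists_uniform_bound z
  obtain ⟨N, hN⟩ := exists_nat_gt (C / η)
  have : Nonempty s := let ⟨p, hp, _⟩ := hs z; ⟨⟨p, hp⟩⟩
  let g : (s → ℤ) → M → ℝ := fun k x => ⨅ i : s, η * k i + d x i
  refine ⟨g '' Set.univ.pi fun _ => Set.Icc (-N : ℤ) N,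
    (Set.Finite.pi fun _ => Set.finite_Icc _ _).image g,
    by rintro _ ⟨k, -, rfl⟩; exact oneLipschitz_ciInf hd _ _, fun f hf => ?_⟩
  have hf' : OneLipschitz d (fun x => f x - f z) := fun x y => by simpa using hf x y
  let k : s → ℤ := fun i => ⌊(f i - f z) / η⌋
  refine ⟨g k, ⟨k, fun i _ => ?_, rfl⟩, f z,
    hf'.abs_sub_ciInf_le (fun x => ?_) (fun i => sub_le_mul_floor_div_le hη _)⟩
  · have hq : |(f i - f z) / η| < N := by
      rw [abs_div, abs_of_pos hη, div_lt_iff₀ hη]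
      linarith [hC f hf i, (div_lt_iff₀ hη).1 hN]
    obtain ⟨hq₁, hq₂⟩ := abs_lt.1 hq
    constructor
    · exact Int.le_floor.2 (by push_cast; linarith)
    · exact Int.floor_le_iff.2 (by push_cast; linarith)
  · obtain ⟨p, hp, hpx⟩ := hs x
    exact ⟨⟨p, hp⟩, hpx⟩

section Integral

variable [MeasurableSpace M]

noncomputable def integralDiff (μ ν : Measure M) (f : M → ℝ) : ℝ :=
  ∫ x, f x ∂μ - ∫ x, f x ∂ν

theorem integralDiff_const_mul (μ ν : Measure M) (c : ℝ) (f : M → ℝ) :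
    integralDiff μ ν (fun x => c * f x) = c * integralDiff μ ν f := by
  simp only [integralDiff, integral_const_mul, mul_sub]

theorem integralDiff_le_add [TopologicalSpace M] [CompactSpace M] [OpensMeasurableSpace M]
    {μ ν : Measure M} [IsProbabilityMeasure μ] [IsProbabilityMeasure ν] {f g : M → ℝ}
    (hf : Continuous f) (hg : Continuous g) {c C : ℝ} (h : ∀ x, |f x - c - g x| ≤ C) :
    integralDiff μ ν f ≤ integralDiff μ ν g + 2 * C := by
  have hint : ∀ {φ : M → ℝ} (m : Measure M) [IsFiniteMeasure m], Continuous φ → Integrable φ m :=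
    fun _ _ hφ => hφ.integrable_of_hasCompactSupport (.of_compactSpace _)
  have hdiff : ∀ (m : Measure M) [IsProbabilityMeasure m],
      |∫ x, f x ∂m - c - ∫ x, g x ∂m| ≤ C := fun m _ => by
    have hsplit : ∫ x, (f x - c - g x) ∂m = ∫ x, f x ∂m - c - ∫ x, g x ∂m := by
      rw [integral_sub (hint (φ := fun x => f x - c) m (hf.sub continuous_const)) (hint m hg),
        integral_sub (hint m hf) (integrable_const c)]
      simp
    rw [← hsplit, ← Real.norm_eq_abs]
    simpa using norm_integral_le_of_norm_le_const (μ := m)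
      (Eventually.of_forall fun x => (Real.norm_eq_abs _).trans_le (h x))
  unfold integralDiff
  linarith [(abs_le.1 (hdiff μ)).2, (abs_le.1 (hdiff ν)).1]

end Integral

section Wasserstein

variable [MeasurableSpace M] {d : M → M → ℝ} {μ ν : Measure M}

/-- The Kantorovich–Rubinstein dual formula for the `W₁`-distance. The `sSup` is only meaningful
when the set is bounded above, see `bddAbove_integralDiff`. -/
noncomputable def wassersteinOne (d : M → M → ℝ) (μ ν : Measure M) : ℝ :=
  sSup {c | ∃ f, OneLipschitz d f ∧ c = integralDiff μ ν f}

theorem bddAbove_integralDiff [TopologicalSpace M] [CompactSpace M] [OpensMeasurableSpace M]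
    [IsProbabilityMeasure μ] [IsProbabilityMeasure ν] (hd : IsCompatiblePseudoMetric d) :
    BddAbove {c | ∃ f, OneLipschitz d f ∧ c = integralDiff μ ν f} := by
  obtain ⟨z⟩ := nonempty_of_isProbabilityMeasure μ
  obtain ⟨C, hC⟩ := hd.exists_uniform_bound z
  refine ⟨2 * C, ?_⟩
  rintro _ ⟨f, hf, rfl⟩
  simpa [integralDiff] using integralDiff_le_add (μ := μ) (ν := ν) (hf.continuous hd)
    continuous_zero (c := f z) fun x => by simpa using hC f hf x

theorem integralDiff_le_wassersteinOne [TopologicalSpace M] [CompactSpace M]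
    [OpensMeasurableSpace M] [IsProbabilityMeasure μ] [IsProbabilityMeasure ν]
    (hd : IsCompatiblePseudoMetric d) {f : M → ℝ} (hf : OneLipschitz d f) :
    integralDiff μ ν f ≤ wassersteinOne d μ ν :=
  le_csSup (bddAbove_integralDiff hd) ⟨f, hf, rfl⟩

theorem wassersteinOne_le (hd : ∀ x y, 0 ≤ d x y) {B : ℝ}
    (h : ∀ f, OneLipschitz d f → integralDiff μ ν f ≤ B) : wassersteinOne d μ ν ≤ B := by
  unfold wassersteinOne
  exact csSup_le ⟨_, 0, oneLipschitz_zero hd, rfl⟩ fun _ ⟨f, hf, hc⟩ => hc ▸ h f hf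

theorem exists_lt_integralDiff (hd : ∀ x y, 0 ≤ d x y) {b : ℝ} (hb : b < wassersteinOne d μ ν) :
    ∃ f, OneLipschitz d f ∧ b < integralDiff μ ν f := by
  unfold wassersteinOne at hb
  obtain ⟨_, ⟨f, hf, rfl⟩, hbf⟩ := exists_lt_of_lt_csSup
    (by exact ⟨_, 0, oneLipschitz_zero hd, rfl⟩) hb
  exact ⟨f, hf, hbf⟩

theorem wassersteinOne_le_mul [TopologicalSpace M] [CompactSpace M] [OpensMeasurableSpace M]
    [IsProbabilityMeasure μ] [IsProbabilityMeasure ν] {d' : M → M → ℝ}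
    (hd : IsCompatiblePseudoMetric d) (hd' : ∀ x y, 0 ≤ d' x y) {c : ℝ} (hc : 0 < c)
    (h : ∀ x y, d' x y ≤ c * d x y) : wassersteinOne d' μ ν ≤ c * wassersteinOne d μ ν := by
  refine wassersteinOne_le hd' fun f hf => ?_
  have hcf : OneLipschitz d (fun x => c⁻¹ * f x) := fun x y => by
    rw [← mul_sub, abs_mul, abs_of_pos (inv_pos.2 hc), inv_mul_le_iff₀ hc]
    exact (hf x y).trans (h x y)
  have := integralDiff_le_wassersteinOne (μ := μ) (ν := ν) hd hcf
  rwa [integralDiff_const_mul, inv_mul_le_iff₀ hc] at this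

end Wasserstein

section WeakConvergence

variable [TopologicalSpace M] [CompactSpace M] [MeasurableSpace M] [OpensMeasurableSpace M]
  {ι : Type*} {l : Filter ι} {d : M → M → ℝ} {μ ν : ι → Measure M} {μ₀ ν₀ : Measure M}

theorem eventually_lt_wassersteinOne (hd : IsCompatiblePseudoMetric d)
    (hμ : ∀ᶠ i in l, IsProbabilityMeasure (μ i)) (hν : ∀ᶠ i in l, IsProbabilityMeasure (ν i))
    (hconv : ∀ f, Continuous f →
      Tendsto (fun i => integralDiff (μ i) (ν i) f) l (𝓝 (integralDiff μ₀ ν₀ f)))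
    {b : ℝ} (hb : b < wassersteinOne d μ₀ ν₀) : ∀ᶠ i in l, b < wassersteinOne d (μ i) (ν i) := by
  obtain ⟨f, hf, hbf⟩ := exists_lt_integralDiff hd.nonneg hb
  filter_upwards [(hconv f (hf.continuous hd)).eventually (eventually_gt_nhds hbf), hμ, hν]
    with i hi _ _
  exact hi.trans_le (integralDiff_le_wassersteinOne hd hf)

theorem eventually_wassersteinOne_lt [IsProbabilityMeasure μ₀] [IsProbabilityMeasure ν₀]
    (hd : IsCompatiblePseudoMetric d)
    (hμ : ∀ᶠ i in l, IsProbabilityMeasure (μ i)) (hν : ∀ᶠ i in l, IsProbabilityMeasure (ν i))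
    (hconv : ∀ f, Continuous f →
      Tendsto (fun i => integralDiff (μ i) (ν i) f) l (𝓝 (integralDiff μ₀ ν₀ f)))
    {b : ℝ} (hb : wassersteinOne d μ₀ ν₀ < b) : ∀ᶠ i in l, wassersteinOne d (μ i) (ν i) < b := by
  have := nonempty_of_isProbabilityMeasure μ₀
  set η := (b - wassersteinOne d μ₀ ν₀) / 6 with hη
  obtain ⟨G, hGfin, hGlip, hGapprox⟩ := hd.exists_finite_approx (η := η) (by linarith)
  have hG : ∀ᶠ i in l, ∀ g ∈ G, integralDiff (μ i) (ν i) g < wassersteinOne d μ₀ ν₀ + η :=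
    hGfin.eventually_all.2 fun g hg => (hconv g ((hGlip g hg).continuous hd)).eventually
      (eventually_lt_nhds ((integralDiff_le_wassersteinOne hd (hGlip g hg)).trans_lt
        (by linarith)))
  filter_upwards [hG, hμ, hν] with i hi _ _
  calc wassersteinOne d (μ i) (ν i) ≤ wassersteinOne d μ₀ ν₀ + 5 * η := by
        refine wassersteinOne_le hd.nonneg fun f hf => ?_
        obtain ⟨g, hg, c, hfg⟩ := hGapprox f hf
        linarith [integralDiff_le_add (μ := μ i) (ν := ν i) (hf.continuous hd)
          ((hGlip g hg).continuous hd) hfg, hi g hg]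
    _ < b := by linarith

theorem tendsto_wassersteinOne_of_tendsto_integralDiff [IsProbabilityMeasure μ₀]
    [IsProbabilityMeasure ν₀] (hd : IsCompatiblePseudoMetric d)
    (hμ : ∀ᶠ i in l, IsProbabilityMeasure (μ i)) (hν : ∀ᶠ i in l, IsProbabilityMeasure (ν i))
    (hconv : ∀ f, Continuous f →
      Tendsto (fun i => integralDiff (μ i) (ν i) f) l (𝓝 (integralDiff μ₀ ν₀ f))) :
    Tendsto (fun i => wassersteinOne d (μ i) (ν i)) l (𝓝 (wassersteinOne d μ₀ ν₀)) :=
  tendsto_order.2 ⟨fun _ hb => eventually_lt_wassersteinOne hd hμ hν hconv hb,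
    fun _ hb => eventually_wassersteinOne_lt hd hμ hν hconv hb⟩

end WeakConvergence

theorem tendsto_of_forall_eventually_inv_mul_le_le_mul {ι : Type*} {l : Filter ι} {a b : ι → ℝ}
    {L : ℝ} (hb : Tendsto b l (𝓝 L))
    (hab : ∀ ε > 0, ∀ᶠ i in l, (1 + ε)⁻¹ * b i ≤ a i ∧ a i ≤ (1 + ε) * b i) :
    Tendsto a l (𝓝 L) := by
  have exists_pos : ∀ {p : ℝ → Prop}, (∀ᶠ ε in 𝓝 0, p ε) → ∃ ε > 0, p ε := fun h =>
    let ⟨ε, hε, hpos⟩ := ((h.filter_mono nhdsWithin_le_nhds).and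
      (self_mem_nhdsWithin (s := Set.Ioi 0))).exists
    ⟨ε, hpos, hε⟩
  refine tendsto_order.2 ⟨fun L' hL' => ?_, fun L' hL' => ?_⟩
  · have hcont : ContinuousAt (fun ε : ℝ => (1 + ε)⁻¹ * L) 0 := by fun_prop (disch := norm_num)
    obtain ⟨ε, hε, hεL⟩ := exists_pos (hcont.eventually (eventually_gt_nhds (by simpa using hL')))
    filter_upwards [hab ε hε, (hb.const_mul (1 + ε)⁻¹).eventually (eventually_gt_nhds hεL)]
      with i hi hi'
    exact hi'.trans_le hi.1
  · have hcont : ContinuousAt (fun ε : ℝ => (1 + ε) * L) 0 := by fun_prop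
    obtain ⟨ε, hε, hεL⟩ := exists_pos (hcont.eventually (eventually_lt_nhds (by simpa using hL')))
    filter_upwards [hab ε hε, (hb.const_mul (1 + ε)).eventually (eventually_lt_nhds hεL)]
      with i hi hi'
    exact hi.2.trans_lt hi'

theorem tendsto_wassersteinOne [TopologicalSpace M] [CompactSpace M] [MeasurableSpace M]
    [OpensMeasurableSpace M] {ι : Type*} {l : Filter ι} {d : ι → M → M → ℝ} {d₀ : M → M → ℝ}
    (hd : ∀ᶠ i in l, IsCompatiblePseudoMetric (d i)) (hd₀ : IsCompatiblePseudoMetric d₀)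
    (hbilip : ∀ ε > 0, ∀ᶠ i in l,
      ∀ x y, (1 + ε)⁻¹ * d₀ x y ≤ d i x y ∧ d i x y ≤ (1 + ε) * d₀ x y)
    {μ ν : ι → Measure M} {μ₀ ν₀ : Measure M} [IsProbabilityMeasure μ₀] [IsProbabilityMeasure ν₀]
    (hμ : ∀ᶠ i in l, IsProbabilityMeasure (μ i)) (hν : ∀ᶠ i in l, IsProbabilityMeasure (ν i))
    (hconv : ∀ f, Continuous f →
      Tendsto (fun i => integralDiff (μ i) (ν i) f) l (𝓝 (integralDiff μ₀ ν₀ f))) :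
    Tendsto (fun i => wassersteinOne (d i) (μ i) (ν i)) l (𝓝 (wassersteinOne d₀ μ₀ ν₀)) := by
  refine tendsto_of_forall_eventually_inv_mul_le_le_mul
    (tendsto_wassersteinOne_of_tendsto_integralDiff hd₀ hμ hν hconv) fun ε hε => ?_
  filter_upwards [hd, hbilip ε hε, hμ, hν] with i hdi hi _ _
  have h1ε : 0 < 1 + ε := by linarith
  constructor
  · rw [inv_mul_le_iff₀ h1ε]
    exact wassersteinOne_le_mul hdi hd₀.nonneg h1ε fun x y => (inv_mul_le_iff₀ h1ε).1 (hi x y).1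
  · exact wassersteinOne_le_mul hd₀ hdi.nonneg h1ε fun x y => (hi x y).2

end

theorem stmt13_general {M : Type*} [TopologicalSpace M] [CompactSpace M]
    [MeasurableSpace M] [BorelSpace M]
    (J : Set ℝ)
    (d : ℝ → M → M → ℝ)
    (hsymm : ∀ t ∈ J, ∀ x y : M, d t x y = d t y x)
    (hself : ∀ t ∈ J, ∀ x : M, d t x x = 0)
    (htri : ∀ t ∈ J, ∀ x y z : M, d t x z ≤ d t x y + d t y z)
    (htop : ∀ t ∈ J, ∀ s : Set M,
      IsOpen s ↔ ∀ x ∈ s, ∃ ε > 0, ∀ y : M, d t x y < ε → y ∈ s)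
    (hbilip : ∀ t₀ ∈ J, ∀ ε > (0 : ℝ), ∃ δ > (0 : ℝ), ∀ t ∈ J, |t - t₀| < δ →
      ∀ x y : M, (1 + ε)⁻¹ * d t₀ x y ≤ d t x y ∧ d t x y ≤ (1 + ε) * d t₀ x y)
    (μ ν : ℝ → Measure M)
    (hμp : ∀ t ∈ J, IsProbabilityMeasure (μ t))
    (hνp : ∀ t ∈ J, IsProbabilityMeasure (ν t))
    (hμc : ∀ f : M → ℝ, Continuous f → ContinuousOn (fun t => ∫ x, f x ∂(μ t)) J)
    (hνc : ∀ f : M → ℝ, Continuous f → ContinuousOn (fun t => ∫ x, f x ∂(ν t)) J)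
    (F : ℝ → ℝ)
    (hF : ∀ t ∈ J, F t = sSup { c : ℝ | ∃ f : M → ℝ,
        (∀ x y : M, |f x - f y| ≤ d t x y) ∧ c = (∫ x, f x ∂(μ t)) - ∫ x, f x ∂(ν t) }) :
    ContinuousOn F J := by
  intro t₀ ht₀
  have hd : ∀ t ∈ J, IsCompatiblePseudoMetric (d t) :=
    fun t ht => ⟨hsymm t ht, hself t ht, htri t ht, htop t ht⟩
  have hbilip' : ∀ ε > 0, ∀ᶠ t in 𝓝[J] t₀,
      ∀ x y, (1 + ε)⁻¹ * d t₀ x y ≤ d t x y ∧ d t x y ≤ (1 + ε) * d t₀ x y := fun ε hε => by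
    obtain ⟨δ, hδ, hδb⟩ := hbilip t₀ ht₀ ε hε
    filter_upwards [self_mem_nhdsWithin, nhdsWithin_le_nhds (Metric.ball_mem_nhds t₀ hδ)]
      with t ht htδ
    exact hδb t ht htδ
  have := hμp t₀ ht₀
  have := hνp t₀ ht₀
  have hW := tendsto_wassersteinOne (eventually_nhdsWithin_of_forall hd) (hd t₀ ht₀) hbilip'
    (eventually_nhdsWithin_of_forall hμp) (eventually_nhdsWithin_of_forall hνp)
    fun f hf => (hμc f hf t₀ ht₀).sub (hνc f hf t₀ ht₀)
  rw [ContinuousWithinAt, hF t₀ ht₀]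
  exact hW.congr' (eventually_nhdsWithin_of_forall fun t ht => (hF t ht).symm)

/-- Let `J ⊆ ℝ` be an interval, `M` a compact metrizable space, `(d t)_{t ∈ J}` a family of
metrics on `M`, each inducing the topology of `M` and depending continuously on `t` in the
bi-Lipschitz sense, and `μ, ν` weakly continuous families of Borel probability measures on `M`.
If the `W₁`-distance `F t = sup { ∫ f dμ_t − ∫ f dν_t : f is 1-Lipschitz for d t }` is
nondecreasing on `J`, then it is continuous on `J`. -/
theorem stmt13 {M : Type*} [TopologicalSpace M] [CompactSpace M] [TopologicalSpace.MetrizableSpace M]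
    [MeasurableSpace M] [BorelSpace M]
    (J : Set ℝ) (hJ : J.OrdConnected)
    (d : ℝ → M → M → ℝ)
    (hsymm : ∀ t ∈ J, ∀ x y : M, d t x y = d t y x)
    (hself : ∀ t ∈ J, ∀ x : M, d t x x = 0)
    (hpos : ∀ t ∈ J, ∀ x y : M, d t x y = 0 → x = y)
    (htri : ∀ t ∈ J, ∀ x y z : M, d t x z ≤ d t x y + d t y z)
    (htop : ∀ t ∈ J, ∀ s : Set M,
      IsOpen s ↔ ∀ x ∈ s, ∃ ε > 0, ∀ y : M, d t x y < ε → y ∈ s)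
    (hbilip : ∀ t₀ ∈ J, ∀ ε > (0 : ℝ), ∃ δ > (0 : ℝ), ∀ t ∈ J, |t - t₀| < δ →
      ∀ x y : M, (1 + ε)⁻¹ * d t₀ x y ≤ d t x y ∧ d t x y ≤ (1 + ε) * d t₀ x y)
    (μ ν : ℝ → Measure M)
    (hμp : ∀ t ∈ J, IsProbabilityMeasure (μ t))
    (hνp : ∀ t ∈ J, IsProbabilityMeasure (ν t))
    (hμc : ∀ f : M → ℝ, Continuous f → ContinuousOn (fun t => ∫ x, f x ∂(μ t)) J)
    (hνc : ∀ f : M → ℝ, Continuous f → ContinuousOn (fun t => ∫ x, f x ∂(ν t)) J)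
    (F : ℝ → ℝ)
    (hF : ∀ t ∈ J, F t = sSup { c : ℝ | ∃ f : M → ℝ,
        (∀ x y : M, |f x - f y| ≤ d t x y) ∧ c = (∫ x, f x ∂(μ t)) - ∫ x, f x ∂(ν t) })
    (hmono : MonotoneOn F J) :
    ContinuousOn F J :=
  stmt13_general J d hsymm hself htri htop hbilip μ ν hμp hνp hμc hνc F hF
end

section
/- Let 0 < ε ≤ 1/4 and let F : [−1, −4ε] → ℝ be continuous on [−1, −4ε] and differentiable on (−1, −4ε), with F(−1) ≤ 1/2 + ε and F′(t) ≤ F(t)(2F(t) − 1)/(−t) for all t ∈ (−1, −4ε). Then F(t) ≤ 1/2 + 2ε/(−t) for every t ∈ [−1, −4ε]. -/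
/-!
With `ψ(t) = -t (F(t) - 1/2)` the differential inequality becomes `ψ' ≤ 2ψ²/t²`, a Riccati
inequality whose solutions with `ψ(-1) = ε` are `1/(1/ε + 2 + 2/t)`. A slightly perturbed
solution is a strict supersolution lying above `ψ` at `t = -1`, so it can never be touched by `ψ`
from below; on `[-1, -4ε]` it is at most `2ε`, which is the claimed bound `F ≤ 1/2 + 2ε/(-t)`.
-/

open Set Topology

theorem image_le_of_deriv_lt_deriv_boundary_of_lt {f f' B B' : ℝ → ℝ} {a b : ℝ}
    (hf : ContinuousOn f (Icc a b)) (hf' : ∀ x ∈ Ioo a b, HasDerivAt f (f' x) x)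
    (hB : ContinuousOn B (Icc a b)) (hB' : ∀ x ∈ Ioo a b, HasDerivAt B (B' x) x)
    (ha : f a < B a) (bound : ∀ x ∈ Ioo a b, f x = B x → f' x < B' x) :
    ∀ x ∈ Icc a b, f x ≤ B x := by
  intro x hx
  rcases hx.1.eq_or_lt with rfl | hax
  · exact ha.le
  have hsub : Ioo a x ⊆ Icc a b := Ioo_subset_Icc_self.trans (Icc_subset_Icc_right hx.2)
  obtain ⟨a', ha', hlt⟩ : ∃ a' ∈ Ioo a x, f a' < B a' := by
    have hev : ∀ᶠ y in 𝓝[Ioo a x] a, f y < B y :=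
      ((hf a (left_mem_Icc.2 (hax.le.trans hx.2))).eventually_lt
        (hB a (left_mem_Icc.2 (hax.le.trans hx.2))) ha).filter_mono (nhdsWithin_mono _ hsub)
    have := left_nhdsWithin_Ioo_neBot hax
    exact (hev.and self_mem_nhdsWithin).exists.imp fun y h => ⟨h.2, h.1⟩
  have hIoo : Ico a' x ⊆ Ioo a b := fun y hy => ⟨ha'.1.trans_le hy.1, hy.2.trans_le hx.2⟩
  have hIcc : Icc a' x ⊆ Icc a b := Icc_subset_Icc ha'.1.le hx.2
  exact image_le_of_deriv_right_lt_deriv_boundary' (hf.mono hIcc)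
    (fun y hy => (hf' y (hIoo hy)).hasDerivWithinAt) hlt.le (hB.mono hIcc)
    (fun y hy => (hB' y (hIoo hy)).hasDerivWithinAt) (fun y hy => bound y (hIoo hy))
    ⟨ha'.2.le, le_rfl⟩

theorem neg_sub_half_add_neg_mul_le {t y y' : ℝ} (ht : t < 0) (h : y' ≤ y * (2 * y - 1) / -t) :
    -(y - 1 / 2) + -t * y' ≤ 2 * (-t * (y - 1 / 2)) ^ 2 / t ^ 2 := by
  rw [le_div_iff₀ (neg_pos.2 ht)] at h
  have : 2 * (-t * (y - 1 / 2)) ^ 2 / t ^ 2 = 2 * (y - 1 / 2) ^ 2 := by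
    field_simp [ht.ne]
  nlinarith

/-- Replacing the constant `2` of the exact solution `1/(1/ε + 2 + 2/t)` by `-t` makes the
barrier a strict supersolution, `B' = (2/t² + 1) B²`, while keeping `B(-1) > ε`. -/
noncomputable def frequencyBarrier (ε t : ℝ) : ℝ := (1 / ε + 2 / t - t)⁻¹

theorem one_div_two_mul_le_frequencyBarrier_denom {ε t : ℝ} (hε : 0 < ε)
    (ht : t ≤ -(4 * ε)) :
    1 / (2 * ε) ≤ 1 / ε + 2 / t - t := by
  have ht0 : t < 0 := by linarith
  have : -(1 / (2 * ε)) ≤ 2 / t := by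
    rw [le_div_iff_of_neg ht0]
    have : 1 / (2 * ε) * (4 * ε) = 2 := by field_simp; ring
    nlinarith
  have : 1 / ε = 2 * (1 / (2 * ε)) := by field_simp
  linarith

theorem frequencyBarrier_pos {ε t : ℝ} (hε : 0 < ε) (ht : t ≤ -(4 * ε)) :
    0 < frequencyBarrier ε t :=
  inv_pos.2 <| (by positivity : (0 : ℝ) < 1 / (2 * ε)).trans_le
    (one_div_two_mul_le_frequencyBarrier_denom hε ht)

theorem frequencyBarrier_le {ε t : ℝ} (hε : 0 < ε) (ht : t ≤ -(4 * ε)) :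
    frequencyBarrier ε t ≤ 2 * ε := by
  simpa [frequencyBarrier] using
    inv_anti₀ (by positivity) (one_div_two_mul_le_frequencyBarrier_denom hε ht)

theorem lt_frequencyBarrier_neg_one {ε : ℝ} (hε : 0 < ε) (hε' : ε < 1) :
    ε < frequencyBarrier ε (-1) := by
  have : frequencyBarrier ε (-1) = ε / (1 - ε) := by
    unfold frequencyBarrier; field_simp; ring
  rw [this, lt_div_iff₀ (by linarith)]
  nlinarith

theorem hasDerivAt_frequencyBarrier {ε t : ℝ} (hε : 0 < ε) (ht : t ≤ -(4 * ε)) :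
    HasDerivAt (frequencyBarrier ε) ((2 / t ^ 2 + 1) * frequencyBarrier ε t ^ 2) t := by
  have ht0 : t ≠ 0 := by linarith
  have hg : HasDerivAt (fun s => 1 / ε + 2 / s - s) (-(2 / t ^ 2) - 1) t := by
    simp only [div_eq_mul_inv]
    exact (((hasDerivAt_inv ht0).const_mul 2).const_add _).sub (hasDerivAt_id' t) |>.congr_deriv
      (by ring)
  refine (hg.inv (inv_pos.1 (frequencyBarrier_pos hε ht)).ne').congr_deriv ?_
  simp only [frequencyBarrier]
  field_simp
  ring

/-- Frequency-comparison ODE lemma: if `0 < ε ≤ 1/4` and `F` is continuous on `[−1, −4ε]`,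
differentiable on `(−1, −4ε)` with `F′(t) ≤ F(t)(2F(t) − 1)/(−t)` there, and
`F(−1) ≤ 1/2 + ε`, then `F(t) ≤ 1/2 + 2ε/(−t)` on `[−1, −4ε]`. -/
theorem stmt14 (ε : ℝ) (hε : 0 < ε) (hε' : ε ≤ 1 / 4)
    (F F' : ℝ → ℝ)
    (hcont : ContinuousOn F (Set.Icc (-1) (-(4 * ε))))
    (hderiv : ∀ t ∈ Set.Ioo (-1 : ℝ) (-(4 * ε)), HasDerivAt F (F' t) t)
    (hF1 : F (-1) ≤ 1 / 2 + ε)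
    (hode : ∀ t ∈ Set.Ioo (-1 : ℝ) (-(4 * ε)), F' t ≤ F t * (2 * F t - 1) / (-t)) :
    ∀ t ∈ Set.Icc (-1 : ℝ) (-(4 * ε)), F t ≤ 1 / 2 + 2 * ε / (-t) := by
  intro t ht
  have hψ : ∀ s ∈ Icc (-1 : ℝ) (-(4 * ε)),
      -s * (F s - 1 / 2) ≤ frequencyBarrier ε s := by
    refine image_le_of_deriv_lt_deriv_boundary_of_lt (f' := fun s => -(F s - 1 / 2) + -s * F' s)
      (continuousOn_neg.mul (hcont.sub continuousOn_const))
      (fun s hs => ((hasDerivAt_neg s).mul ((hderiv s hs).sub_const _)).congr_deriv (by ring))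
      (fun s hs => (hasDerivAt_frequencyBarrier hε hs.2).continuousAt.continuousWithinAt)
      (fun s hs => hasDerivAt_frequencyBarrier hε hs.2.le) ?_ fun s hs hψB => ?_
    · linarith [lt_frequencyBarrier_neg_one hε (by linarith)]
    · have hs0 : s < 0 := by linarith [hs.2]
      calc -(F s - 1 / 2) + -s * F' s ≤ 2 * (-s * (F s - 1 / 2)) ^ 2 / s ^ 2 :=
            neg_sub_half_add_neg_mul_le hs0 (hode s hs)
        _ < (2 / s ^ 2 + 1) * frequencyBarrier ε s ^ 2 := by
          rw [hψB, add_mul, div_mul_eq_mul_div]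
          linarith [pow_pos (frequencyBarrier_pos hε hs.2.le) 2]
  have hτ : 0 < -t := by linarith [ht.2]
  have hψt := (hψ t ht).trans (frequencyBarrier_le hε ht.2)
  have hFt : F t - 1 / 2 ≤ 2 * ε / -t := by rw [le_div_iff₀ hτ]; linarith
  linarith
end
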